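/- arXiv:math/9810163 — 4 statements merged into one kernel-verified Lean document; each statement's English description precedes it below -/
import Mathlib

section
/- Let (τ_n)_{n≥1} be a positive sequence of real numbers. Suppose that either liminf_{n→∞} τ_n > 0, or both of the following hold: (a) liminf_{n→∞} n·τ_n > 0, and (b) there is a constant C ∈ (0,∞) such that for each integer n ≥ 0, if 2^{n−1} ≤ k < 2^n then C·τ_{2^{n−1}} ≥ τ_k ≥ C^{−1}·τ_{2^n}. Then (τ_n) satisfies Condition A. -/
/-!
It suffices to show `n cₙ ≤ 1` for all large `n`, since then the two series agree from some
point on. If `τ ≥ b > 0` eventually, this follows from `τₙ min(n cₙ, 1) → 0`. Under the doubling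
condition, `τ ≥ δ / 2Cm` on each dyadic block `[m, 2m)`, where `δ > 0` bounds `n τₙ` from below.
If `n cₙ > 1` for some `2m ≤ n < 4m`, then `k cₖ ≥ m cₙ > 1/4` on the block because `c` decreases,
so the block carries a mass `≥ δ / 8C` of the series: impossible for large blocks of a
convergent series.
-/

open Filter Topology Finset

/-- A positive sequence `τ` (indexed from 1) satisfies Condition A provided that for every
positive decreasing sequence `c` such that `∑_{n=1}^∞ τ_n · min(n·c_n, 1)` converges,
the series `∑_{n=1}^∞ τ_n · n · c_n` also converges. -/
def ConditionA (τ : ℕ → ℝ) : Prop :=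
  ∀ c : ℕ → ℝ, (∀ n, 1 ≤ n → 0 ≤ c n) → (∀ m n, 1 ≤ m → m ≤ n → c n ≤ c m) →
    Summable (fun n : ℕ => τ (n + 1) * min ((n + 1 : ℝ) * c (n + 1)) 1) →
    Summable (fun n : ℕ => τ (n + 1) * ((n + 1 : ℝ) * c (n + 1)))

lemma exists_pos_eventually_le_of_liminf_pos {α : Type*} {l : Filter α} {u : α → ℝ}
    (hu : ∀ᶠ n in l, 0 ≤ u n) (h : 0 < l.liminf u) : ∃ b, 0 < b ∧ ∀ᶠ n in l, b ≤ u n :=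
  ⟨l.liminf u / 2, by positivity,
    (eventually_lt_of_lt_liminf (by linarith) (isBoundedUnder_of_eventually_ge hu)).mono
      fun _ => le_of_lt⟩

lemma Summable.tendsto_sum_Ico_two_mul {G : Type*} [AddCommGroup G] [TopologicalSpace G]
    [IsTopologicalAddGroup G] {f : ℕ → G} (hf : Summable f) :
    Tendsto (fun m => ∑ k ∈ Ico m (2 * m), f k) atTop (𝓝 0) := by
  have hpartial := hf.hasSum.tendsto_sum_nat
  have hdouble := hpartial.comp (tendsto_id.const_mul_atTop' two_pos)
  simpa [Function.comp_def, ← sum_Ico_eq_sub _ (Nat.le_mul_of_pos_left _ two_pos)]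
    using hdouble.sub hpartial

lemma summable_mul_of_summable_mul_min_one {t x : ℕ → ℝ} (hx : ∀ᶠ n in atTop, x n ≤ 1)
    (hs : Summable fun n => t n * min (x n) 1) : Summable fun n => t n * x n :=
  hs.congr_atTop (hx.mono fun n hn => congrArg (t n * ·) (min_eq_left hn))

lemma eventually_lt_one_of_summable_mul_min_one {t x : ℕ → ℝ} {b : ℝ} (hb : 0 < b)
    (ht : ∀ᶠ n in atTop, b ≤ t n) (hs : Summable fun n => t n * min (x n) 1) :
    ∀ᶠ n in atTop, x n < 1 := by
  filter_upwards [ht, hs.tendsto_atTop_zero.eventually_lt_const hb] with n hbt hsmall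
  by_contra! hx
  rw [min_eq_right hx, mul_one] at hsmall
  linarith

lemma exists_two_pow_mul_two_le_lt_mul_four {n : ℕ} (hn : 2 ≤ n) :
    ∃ j, 2 * 2 ^ j ≤ n ∧ n < 4 * 2 ^ j := by
  have hlog : 1 ≤ Nat.log 2 n := Nat.le_log_of_pow_le one_lt_two (by simpa using hn)
  refine ⟨Nat.log 2 n - 1, ?_, ?_⟩
  · calc 2 * 2 ^ (Nat.log 2 n - 1)
        _ = 2 ^ Nat.log 2 n := by rw [← pow_succ', Nat.sub_add_cancel hlog]
        _ ≤ n := Nat.pow_log_le_self 2 (by omega)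
  · calc n < 2 ^ (Nat.log 2 n + 1) := Nat.lt_pow_succ_log_self one_lt_two n
      _ = 4 * 2 ^ (Nat.log 2 n - 1) := by
        rw [show Nat.log 2 n + 1 = (Nat.log 2 n - 1) + 2 by omega, pow_add]; ring

lemma mul_div_four_le_sum_Ico_mul_min_one {τ c : ℕ → ℝ} {a : ℝ} {m n : ℕ} (ha : 0 ≤ a)
    (hτ : ∀ k ∈ Ico m (2 * m), a ≤ τ k) (hc : ∀ k ∈ Ico m (2 * m), c n ≤ c k)
    (hn : n < 4 * m) (hcn : 1 < n * c n) :
    m * a / 4 ≤ ∑ k ∈ Ico m (2 * m), τ k * min (k * c k) 1 := by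
  have hcn_pos : 0 < c n := pos_of_mul_pos_right (one_pos.trans hcn) n.cast_nonneg
  have hquarter : 1 / 4 ≤ (m : ℝ) * c n := by
    have : (n : ℝ) < 4 * m := by exact_mod_cast hn
    nlinarith
  have hterm : ∀ k ∈ Ico m (2 * m), a / 4 ≤ τ k * min (k * c k) 1 := by
    intro k hk
    have hmk : (m : ℝ) ≤ k := by exact_mod_cast (mem_Ico.1 hk).1
    have hmin : 1 / 4 ≤ min ((k : ℝ) * c k) 1 := by
      refine le_min ?_ (by norm_num)
      calc 1 / 4 ≤ (m : ℝ) * c n := hquarter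
        _ ≤ k * c k := mul_le_mul hmk (hc k hk) hcn_pos.le k.cast_nonneg
    calc a / 4 = a * (1 / 4) := by ring
      _ ≤ τ k * min ((k : ℝ) * c k) 1 :=
        mul_le_mul (hτ k hk) hmin (by norm_num) (ha.trans (hτ k hk))
  have hcard : #(Ico m (2 * m)) = m := by rw [Nat.card_Ico]; omega
  calc (m : ℝ) * a / 4 = #(Ico m (2 * m)) • (a / 4) := by rw [hcard, nsmul_eq_mul]; ring
    _ ≤ _ := card_nsmul_le_sum _ _ _ hterm

lemma eventually_mul_le_one_of_doubling {τ c : ℕ → ℝ} {C δ : ℝ} (hC : 0 < C) (hδ : 0 < δ)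
    (hτδ : ∀ᶠ n in atTop, δ ≤ n * τ n)
    (hdbl : ∀ n k : ℕ, 2 ^ (n - 1) ≤ k → k < 2 ^ n → C⁻¹ * τ (2 ^ n) ≤ τ k)
    (hmono : ∀ m n, 1 ≤ m → m ≤ n → c n ≤ c m)
    (hs : Summable fun n : ℕ => τ n * min (n * c n) 1) :
    ∀ᶠ n : ℕ in atTop, (n : ℝ) * c n ≤ 1 := by
  set ε := C⁻¹ * δ / 8
  obtain ⟨M, hM⟩ := eventually_atTop.1 <| hτδ.and <|
    hs.tendsto_sum_Ico_two_mul.eventually_lt_const (by positivity : (0 : ℝ) < ε)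
  refine eventually_atTop.2 ⟨4 * M + 2, fun n hn => ?_⟩
  by_contra! hcn
  obtain ⟨j, hjn, hnj⟩ := exists_two_pow_mul_two_le_lt_mul_four (by omega : 2 ≤ n)
  set m := 2 ^ j
  have hm : 1 ≤ m := Nat.one_le_two_pow
  have hτ2m : δ ≤ (2 * m : ℝ) * τ (2 * m) := by exact_mod_cast (hM (2 * m) (by omega)).1
  have hblock : ∀ k ∈ Ico m (2 * m), C⁻¹ * δ / (2 * m) ≤ τ k := by
    intro k hk
    have hdbl_k := hdbl (j + 1) k (by simpa using (mem_Ico.1 hk).1)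
      (by simpa [pow_succ'] using (mem_Ico.1 hk).2)
    rw [pow_succ'] at hdbl_k
    calc C⁻¹ * δ / (2 * m) = C⁻¹ * (δ / (2 * m)) := mul_div_assoc _ _ _
      _ ≤ C⁻¹ * τ (2 * m) := by
        gcongr
        rw [div_le_iff₀ (by positivity)]
        linarith
      _ ≤ τ k := by exact_mod_cast hdbl_k
  have hmass := mul_div_four_le_sum_Ico_mul_min_one (by positivity) hblock
    (fun k hk => hmono k n (hm.trans (mem_Ico.1 hk).1) (by linarith [(mem_Ico.1 hk).2])) hnj hcn
  have hε : (m : ℝ) * (C⁻¹ * δ / (2 * m)) / 4 = ε := by simp only [ε]; field_simp; ring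
  linarith [(hM m (by omega)).2]

theorem stmt0 (τ : ℕ → ℝ) (hτ : ∀ n, 1 ≤ n → 0 ≤ τ n)
    (h : 0 < atTop.liminf τ ∨
      ((0 < atTop.liminf (fun n : ℕ => (n : ℝ) * τ n)) ∧
       ∃ C : ℝ, 0 < C ∧ ∀ n k : ℕ, 2 ^ (n - 1) ≤ k → k < 2 ^ n →
         τ k ≤ C * τ (2 ^ (n - 1)) ∧ C⁻¹ * τ (2 ^ n) ≤ τ k)) :
    ConditionA τ := by
  intro c _ hmono hsum
  have hsum' : Summable fun n : ℕ => τ n * min (n * c n) 1 :=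
    (summable_nat_add_iff 1).1 (by simpa using hsum)
  have hτ_ev : ∀ᶠ n in atTop, 0 ≤ τ n := eventually_atTop.2 ⟨1, hτ⟩
  have hsmall : ∀ᶠ n : ℕ in atTop, (n : ℝ) * c n ≤ 1 := by
    rcases h with hliminf | ⟨hliminf, C, hC, hdbl⟩
    · obtain ⟨b, hb, hbτ⟩ := exists_pos_eventually_le_of_liminf_pos hτ_ev hliminf
      exact (eventually_lt_one_of_summable_mul_min_one hb hbτ hsum').mono fun _ => le_of_lt
    · obtain ⟨δ, hδ, hδτ⟩ := exists_pos_eventually_le_of_liminf_pos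
        (hτ_ev.mono fun n hn => mul_nonneg n.cast_nonneg hn) hliminf
      exact eventually_mul_le_one_of_doubling hC hδ hδτ (fun n k h₁ h₂ => (hdbl n k h₁ h₂).2)
        hmono hsum'
  refine summable_mul_of_summable_mul_min_one ?_ hsum
  simpa using (tendsto_add_atTop_nat 1).eventually hsmall
end

section
/- Let (τ_n) be a positive sequence and (a_n) an increasing strictly positive sequence. Suppose there are real constants θ ≥ 1, C > 0 and N ≥ 2 such that for all n ≥ N: (a_n^{2θ}/n^{θ−1})·∑_{k=n}^∞ k^θ τ_k / a_k^{2θ} ≤ C·∑_{k=1}^{n−1} k τ_k, and liminf_{n→∞} inf_{k≥n} (a_k²/(k·a_n²))·∑_{j=1}^{n−1} j τ_j > 0. Then any real random variable X₁ satisfying ∑_{n=1}^∞ n τ_n P(|X₁| ≥ ε a_n) < ∞ for all ε > 0 automatically satisfies ∑_{n=1}^∞ τ_n exp(−ε² a_n² / (n T_{ε,n})) < ∞ for all ε > 0, where T_{ε,n} = E[X₁²·1_{|X₁| < ε a_n}] and exp(−t/0) := 0 for t > 0. -/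
open MeasureTheory Filter
open scoped ProbabilityTheory ENNReal

lemma aux_rpow_diff_le {θ u v : ℝ} (hθ : 1 ≤ θ) (hv : 0 ≤ v) (hvu : v ≤ u) :
    u ^ θ - v ^ θ ≤ θ * u ^ (θ - 1) * (u - v) := by
  have hu : 0 ≤ u := hv.trans hvu
  rcases eq_or_lt_of_le hu with h | hu'
  · have hv0 : v = 0 := le_antisymm (hvu.trans h.symm.le) hv
    subst hv0
    rw [← h]
    simp [Real.zero_rpow (by linarith : θ ≠ 0)]
  · set y := v / u with hy
    have hy0 : 0 ≤ y := div_nonneg hv hu'.le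
    have hy1 : y ≤ 1 := (div_le_one hu').mpr hvu
    have hb := one_add_mul_self_le_rpow_one_add (s := y - 1) (by linarith) hθ
    rw [add_sub_cancel] at hb
    have hyu : (y * u) = v := by rw [hy, div_mul_cancel₀ _ hu'.ne']
    have hmul : (y : ℝ) ^ θ * u ^ θ = v ^ θ := by
      rw [← Real.mul_rpow hy0 hu'.le, hyu]
    have hup : (0:ℝ) < u ^ θ := Real.rpow_pos_of_pos hu' θ
    have h2 : (1 + θ * (y - 1)) * u ^ θ ≤ v ^ θ := by
      calc (1 + θ * (y - 1)) * u ^ θ ≤ y ^ θ * u ^ θ :=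
            mul_le_mul_of_nonneg_right hb hup.le
        _ = v ^ θ := hmul
    have hpow : u ^ θ = u ^ (θ - 1) * u := by
      rw [← Real.rpow_add_one hu'.ne' (θ - 1), sub_add_cancel]
    have h2' : u ^ θ + θ * (y * u ^ θ) - θ * u ^ θ ≤ v ^ θ := by linear_combination h2
    have h4 : θ * u ^ (θ - 1) * (u - v) = θ * u ^ θ - θ * (y * u ^ θ) := by
      rw [hpow, ← hyu]; ring
    rw [h4]; linarith

lemma aux_exp_neg_le {θ x : ℝ} (hθ : 1 ≤ θ) (hx : 0 < x) :
    Real.exp (-x) ≤ θ ^ θ / x ^ θ := by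
  have hθ0 : (0:ℝ) < θ := lt_of_lt_of_le one_pos hθ
  have h1 : x / θ ≤ Real.exp (x / θ) := by
    have := Real.add_one_le_exp (x / θ)
    linarith
  have h2 : (x / θ) ^ θ ≤ (Real.exp (x / θ)) ^ θ :=
    Real.rpow_le_rpow (by positivity) h1 hθ0.le
  have h3 : (Real.exp (x / θ)) ^ θ = Real.exp x := by
    rw [← Real.exp_one_rpow (x / θ), ← Real.rpow_mul (Real.exp_pos 1).le,
      Real.exp_one_rpow, div_mul_cancel₀ _ hθ0.ne']
  have h4 : (x / θ) ^ θ = x ^ θ / θ ^ θ := Real.div_rpow hx.le hθ0.le θ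
  have h5 : x ^ θ / θ ^ θ ≤ Real.exp x := by rw [← h4, ← h3]; exact h2
  have hxp : (0:ℝ) < x ^ θ := Real.rpow_pos_of_pos hx θ
  have hθp : (0:ℝ) < θ ^ θ := Real.rpow_pos_of_pos hθ0 θ
  rw [div_le_iff₀ hθp] at h5
  rw [le_div_iff₀ hxp, Real.exp_neg, mul_comm, mul_inv_le_iff₀ (Real.exp_pos x)]
  linarith

lemma aux_sum_Icc_one (M : ℕ) (f : ℕ → ℝ) :
    ∑ j ∈ Finset.Icc 1 M, f j = ∑ n ∈ Finset.range M, f (n + 1) := by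
  induction M with
  | zero => simp
  | succ M ih =>
      rw [Finset.sum_Icc_succ_top (by omega), ih, Finset.sum_range_succ]

set_option maxHeartbeats 1000000 in
theorem stmt3 {Ω : Type*} [MeasureSpace Ω] [IsProbabilityMeasure (ℙ : Measure Ω)]
    (X : Ω → ℝ) (hX : Measurable X)
    (τ a : ℕ → ℝ)
    (hτ : ∀ n, 1 ≤ n → 0 ≤ τ n)
    (ha : ∀ n, 1 ≤ n → 0 < a n) (hamono : ∀ m n, 1 ≤ m → m ≤ n → a m ≤ a n)
    (θ C : ℝ) (N : ℕ) (hθ : 1 ≤ θ) (hC : 0 < C) (hN : 2 ≤ N)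
    (hcond1 : ∀ n : ℕ, N ≤ n →
      ENNReal.ofReal (a n ^ (2 * θ) / (n : ℝ) ^ (θ - 1)) *
          ∑' k : ℕ, ENNReal.ofReal (((n : ℝ) + k) ^ θ * τ (n + k) / a (n + k) ^ (2 * θ)) ≤
        ENNReal.ofReal (C * ∑ j ∈ Finset.Icc 1 (n - 1), (j : ℝ) * τ j))
    (hcond2 : 0 < atTop.liminf (fun n : ℕ =>
      (⨅ k : {k : ℕ // n ≤ k}, a k.1 ^ 2 / ((k.1 : ℝ) * a n ^ 2)) *
        ∑ j ∈ Finset.Icc 1 (n - 1), (j : ℝ) * τ j))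
    (hii : ∀ ε : ℝ, 0 < ε →
      Summable (fun n : ℕ =>
        (n + 1 : ℝ) * τ (n + 1) * (ℙ {ω | ε * a (n + 1) ≤ |X ω|}).toReal)) :
    ∀ ε : ℝ, 0 < ε →
      Summable (fun n : ℕ =>
        if (∫ ω in {ω | |X ω| < ε * a (n + 1)}, (X ω) ^ 2 ∂ℙ) = 0 then 0
        else τ (n + 1) * Real.exp (-(ε ^ 2 * a (n + 1) ^ 2) /
          ((n + 1 : ℝ) * ∫ ω in {ω | |X ω| < ε * a (n + 1)}, (X ω) ^ 2 ∂ℙ))) := by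
  intro ε hε
  -- local notation
  set S : ℕ → ℝ := fun m => ∑ j ∈ Finset.Icc 1 m, (j : ℝ) * τ j with hSdef
  set E : ℕ → Set Ω := fun m => {ω | |X ω| < ε * a m} with hEdef
  set T : ℕ → ℝ := fun m => ∫ ω in E m, (X ω) ^ 2 ∂ℙ with hTdef
  set P : ℕ → ℝ := fun j => (ℙ {ω | ε * a j ≤ |X ω|}).toReal with hPdef
  set q : ℕ → ℝ := fun l => (ℙ (E (l + 1) \ E l)).toReal with hqdef
  set w : ℕ → ℝ := fun k => (k : ℝ) ^ θ * τ k / a k ^ (2 * θ) with hwdef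
  show Summable (fun n : ℕ =>
      if T (n+1) = 0 then 0
      else τ (n + 1) * Real.exp (-(ε ^ 2 * a (n + 1) ^ 2) / ((n + 1 : ℝ) * T (n+1))))
  have hθ0 : (0 : ℝ) < θ := lt_of_lt_of_le one_pos hθ
  have hS0 : ∀ m, 0 ≤ S m := by
    intro m
    apply Finset.sum_nonneg
    intro j hj
    rw [Finset.mem_Icc] at hj
    have := hτ j hj.1
    positivity
  have hq0 : ∀ l, 0 ≤ q l := fun l => ENNReal.toReal_nonneg
  have hP0 : ∀ j, 0 ≤ P j := fun j => ENNReal.toReal_nonneg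
  have hEmeas : ∀ m, MeasurableSet (E m) := fun m => measurableSet_lt hX.abs measurable_const
  have hEsub : ∀ l m, 1 ≤ l → l ≤ m → E l ⊆ E m := by
    intro l m hl hlm ω hω
    have : ε * a l ≤ ε * a m := by nlinarith [hamono l m hl hlm]
    exact lt_of_lt_of_le hω this
  have hIntOn : ∀ m, 1 ≤ m → IntegrableOn (fun ω => (X ω) ^ 2) (E m) ℙ := by
    intro m hm
    apply Integrable.mono' (integrable_const ((ε * a m) ^ 2))
      ((hX.pow_const 2).aestronglyMeasurable.restrict)
    rw [ae_restrict_iff' (hEmeas m)]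
    apply ae_of_all
    intro ω hω
    have h1 : |X ω| < ε * a m := hω
    have h2 : |X ω| ^ 2 ≤ (ε * a m) ^ 2 := by nlinarith [abs_nonneg (X ω)]
    rw [Real.norm_eq_abs, abs_of_nonneg (sq_nonneg (X ω))]
    rw [sq_abs] at h2
    exact h2
  have hT0 : ∀ m, 0 ≤ T m := by
    intro m
    exact setIntegral_nonneg (hEmeas m) (fun ω _ => sq_nonneg _)
  have hTmono : ∀ l m, 1 ≤ l → l ≤ m → T l ≤ T m := by
    intro l m hl hlm
    exact setIntegral_mono_set (hIntOn m (hl.trans hlm))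
      (ae_of_all _ fun ω => sq_nonneg _) ((hEsub l m hl hlm).eventuallyLE)
  have hTle : ∀ m, 1 ≤ m → T m ≤ (ε * a m) ^ 2 := by
    intro m hm
    have h1 : T m ≤ ∫ ω in E m, (ε * a m) ^ 2 ∂ℙ := by
      apply setIntegral_mono_on (hIntOn m hm) (integrableOn_const (measure_ne_top _ _))
        (hEmeas m)
      intro ω hω
      have h1 : |X ω| < ε * a m := hω
      nlinarith [abs_nonneg (X ω), sq_abs (X ω)]
    rw [setIntegral_const] at h1
    refine h1.trans ?_
    rw [smul_eq_mul]
    have hm1 : (ℙ (E m)).toReal ≤ 1 := by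
      simpa using ENNReal.toReal_mono ENNReal.one_ne_top prob_le_one
    rw [measureReal_def]
    nlinarith [ENNReal.toReal_nonneg (a := ℙ (E m)), sq_nonneg (ε * a m)]
  have hdle : ∀ l, 1 ≤ l → T (l + 1) - T l ≤ (ε * a (l + 1)) ^ 2 * q l := by
    intro l hl
    have hdiff : T (l + 1) - T l = ∫ ω in E (l + 1) \ E l, (X ω) ^ 2 ∂ℙ :=
      (integral_diff (hEmeas l) (hIntOn (l + 1) (by omega)) (hEsub l (l+1) hl (by omega))).symm
    rw [hdiff]
    have h1 : ∫ ω in E (l + 1) \ E l, (X ω) ^ 2 ∂ℙ ≤ ∫ ω in E (l + 1) \ E l, (ε * a (l+1)) ^ 2 ∂ℙ := by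
      apply setIntegral_mono_on ((hIntOn (l+1) (by omega)).mono_set Set.diff_subset)
        (integrableOn_const (measure_ne_top _ _))
        ((hEmeas (l+1)).diff (hEmeas l))
      intro ω hω
      have h1 : |X ω| < ε * a (l+1) := hω.1
      nlinarith [abs_nonneg (X ω), sq_abs (X ω)]
    rw [setIntegral_const, smul_eq_mul, mul_comm] at h1
    exact h1
  have hqtel : ∀ j M, 1 ≤ j → ∑ l ∈ Finset.Ico j M, q l ≤ P j := by
    intro j M hj
    rcases le_or_gt j M with hjM | hjM
    · have hq_eq : ∀ l, 1 ≤ l → q l = (ℙ (E (l+1))).toReal - (ℙ (E l)).toReal := by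
        intro l hl
        have h1 : ℙ (E (l+1) \ E l) = ℙ (E (l+1)) - ℙ (E l) :=
          measure_diff (hEsub l (l+1) hl (by omega)) (hEmeas l).nullMeasurableSet
            (measure_ne_top _ _)
        rw [hqdef]
        simp only
        rw [h1, ENNReal.toReal_sub_of_le (measure_mono (hEsub l (l+1) hl (by omega)))
          (measure_ne_top _ _)]
      have h2 : ∑ l ∈ Finset.Ico j M, q l
          = ∑ l ∈ Finset.Ico j M, ((ℙ (E (l+1))).toReal - (ℙ (E l)).toReal) := by
        apply Finset.sum_congr rfl
        intro l hl
        rw [Finset.mem_Ico] at hl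
        exact hq_eq l (by omega)
      rw [h2, Finset.sum_Ico_eq_sub _ hjM, Finset.sum_range_sub (fun l => (ℙ (E l)).toReal),
        Finset.sum_range_sub (fun l => (ℙ (E l)).toReal)]
      have hcompl : {ω | ε * a j ≤ |X ω|} = (E j)ᶜ := by
        ext ω; simp [hEdef, not_lt]
      have hPj : P j + (ℙ (E j)).toReal = 1 := by
        rw [hPdef]
        simp only
        rw [hcompl, prob_compl_eq_one_sub (hEmeas j), ENNReal.toReal_sub_of_le
          (prob_le_one) ENNReal.one_ne_top]
        simp
      have hM1 : (ℙ (E M)).toReal ≤ 1 := by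
        simpa using ENNReal.toReal_mono ENNReal.one_ne_top prob_le_one
      linarith
    · rw [Finset.Ico_eq_empty (by omega)]
      simp only [Finset.sum_empty]
      exact hP0 j
  -- the summable series from hii (phrased via P, before clearing values)
  have hiisum : Summable (fun n : ℕ => (n + 1 : ℝ) * τ (n + 1) * P (n + 1)) := hii ε hε
  have hiinonneg : ∀ n : ℕ, 0 ≤ (n + 1 : ℝ) * τ (n + 1) * P (n + 1) := by
    intro n
    have h1 := hτ (n + 1) (by omega)
    have h2 := hP0 (n + 1)
    positivity
  set Sig : ℝ := ∑' n : ℕ, (n + 1 : ℝ) * τ (n + 1) * P (n + 1) with hSigdef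
  have hSig0 : 0 ≤ Sig := tsum_nonneg hiinonneg
  clear_value T q P E
  -- extraction from hcond2
  obtain ⟨c, hc, n₀, hn₀1, hstar⟩ :
      ∃ c : ℝ, 0 < c ∧ ∃ n₀ : ℕ, 1 ≤ n₀ ∧ ∀ n, n₀ ≤ n → ∀ k, n ≤ k →
        c * k * a n ^ 2 ≤ a k ^ 2 * S (n - 1) := by
    set f : ℕ → ℝ := fun n =>
        (⨅ k : {k : ℕ // n ≤ k}, a k.1 ^ 2 / ((k.1 : ℝ) * a n ^ 2)) *
          ∑ j ∈ Finset.Icc 1 (n - 1), (j : ℝ) * τ j with hfdef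
    have hlim : atTop.liminf f = sSup {x : ℝ | ∀ᶠ n in atTop, x ≤ f n} := by
      rw [Filter.liminf_eq]
    obtain ⟨c, hcmem, hc⟩ : ∃ c ∈ {x : ℝ | ∀ᶠ n in atTop, x ≤ f n}, 0 < c := by
      by_contra hcon
      push_neg at hcon
      have h0 : atTop.liminf f ≤ 0 := by
        rw [hlim]
        exact Real.sSup_le (fun x hx => hcon x hx) le_rfl
      exact absurd hcond2 (not_lt.2 h0)
    obtain ⟨n₀', hn₀'⟩ := Filter.eventually_atTop.1 hcmem
    refine ⟨c, hc, max n₀' 1, le_max_right _ _, ?_⟩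
    intro n hn k hk
    have hn1 : 1 ≤ n := le_trans (le_max_right _ _) hn
    have hfn : c ≤ f n := hn₀' n (le_trans (le_max_left _ _) hn)
    have hbdd : BddBelow (Set.range (fun k : {k : ℕ // n ≤ k} =>
        a k.1 ^ 2 / ((k.1 : ℝ) * a n ^ 2))) := by
      refine ⟨0, ?_⟩
      rintro x ⟨⟨k', hk'⟩, rfl⟩
      have hk1 : (0:ℝ) ≤ (k' : ℝ) * a n ^ 2 := by positivity
      positivity
    have hinf_le : (⨅ k : {k : ℕ // n ≤ k}, a k.1 ^ 2 / ((k.1 : ℝ) * a n ^ 2))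
        ≤ a k ^ 2 / ((k : ℝ) * a n ^ 2) := ciInf_le hbdd ⟨k, hk⟩
    have h2 : c ≤ (a k ^ 2 / ((k : ℝ) * a n ^ 2)) * ∑ j ∈ Finset.Icc 1 (n-1), (j:ℝ) * τ j := by
      refine hfn.trans ?_
      exact mul_le_mul_of_nonneg_right hinf_le (hS0 _)
    have hkpos : (0:ℝ) < (k : ℝ) := by
      have : 1 ≤ k := le_trans hn1 hk
      exact_mod_cast Nat.pos_of_ne_zero (by omega)
    have hapos := ha n hn1
    have h3 : (0:ℝ) < (k : ℝ) * a n ^ 2 := by positivity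
    rw [div_mul_eq_mul_div, le_div_iff₀ h3] at h2
    nlinarith [h2]
  set n₁ : ℕ := max N (max n₀ 2) with hn₁def
  have hn₁N : N ≤ n₁ := le_max_left _ _
  have hn₁n₀ : n₀ ≤ n₁ := le_trans (le_max_left _ _) (le_max_right _ _)
  have hn₁2 : 2 ≤ n₁ := le_trans (le_max_right _ _) (le_max_right _ _)
  -- Fact A
  have factA : ∀ M : ℕ, ∑ l ∈ Finset.Ico 1 M, S l * q l ≤ Sig := by
    intro M
    have step1 : ∀ l ∈ Finset.Ico 1 M,
        S l * q l = ∑ j ∈ Finset.Icc 1 M, (if j ≤ l then ((j:ℝ) * τ j) * q l else 0) := by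
      intro l hl
      rw [Finset.mem_Ico] at hl
      rw [hSdef]
      simp only
      rw [Finset.sum_mul]
      rw [← Finset.sum_filter]
      apply Finset.sum_congr
      · ext j
        simp only [Finset.mem_filter, Finset.mem_Icc]
        omega
      · intros; rfl
    calc ∑ l ∈ Finset.Ico 1 M, S l * q l
        = ∑ l ∈ Finset.Ico 1 M, ∑ j ∈ Finset.Icc 1 M,
            (if j ≤ l then ((j:ℝ) * τ j) * q l else 0) :=
          Finset.sum_congr rfl step1
      _ = ∑ j ∈ Finset.Icc 1 M, ∑ l ∈ Finset.Ico 1 M,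
            (if j ≤ l then ((j:ℝ) * τ j) * q l else 0) :=
          Finset.sum_comm
      _ ≤ ∑ j ∈ Finset.Icc 1 M, ((j:ℝ) * τ j) * P j := by
          apply Finset.sum_le_sum
          intro j hj
          rw [Finset.mem_Icc] at hj
          have hrw : ∑ l ∈ Finset.Ico 1 M, (if j ≤ l then ((j:ℝ) * τ j) * q l else 0)
              = ((j:ℝ) * τ j) * ∑ l ∈ Finset.Ico j M, q l := by
            rw [Finset.mul_sum, ← Finset.sum_filter]
            apply Finset.sum_congr
            · ext l
              simp only [Finset.mem_filter, Finset.mem_Ico]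
              omega
            · intros; rfl
          rw [hrw]
          have hmul : (0:ℝ) ≤ (j:ℝ) * τ j := by
            have := hτ j hj.1; positivity
          exact mul_le_mul_of_nonneg_left (hqtel j M hj.1) hmul
      _ = ∑ n ∈ Finset.range M, ((n+1:ℝ)) * τ (n+1) * P (n+1) := by
          rw [aux_sum_Icc_one M (fun j => ((j:ℝ) * τ j) * P j)]
          apply Finset.sum_congr rfl
          intro x hx
          push_cast
          ring
      _ ≤ Sig := by
          rw [hSigdef]
          exact Summable.sum_le_tsum _ (fun i _ => hiinonneg i) hiisum
  -- Fact C
  have hw0 : ∀ k, 1 ≤ k → 0 ≤ w k := by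
    intro k hk
    have h1 := hτ k hk
    have h2 : (0:ℝ) < a k ^ (2*θ) := Real.rpow_pos_of_pos (ha k hk) _
    have h3 : (0:ℝ) ≤ (k:ℝ) ^ θ := Real.rpow_nonneg (by positivity) _
    rw [hwdef]
    positivity
  have factC : ∀ m, N ≤ m → ∀ M : ℕ, ∑ k ∈ Finset.Icc m M, w k ≤
      C * S (m - 1) / (a m ^ (2 * θ) / (m : ℝ) ^ (θ - 1)) := by
    intro m hm M
    have hmpos : (0:ℝ) < (m:ℝ) := by
      have : 0 < m := by omega
      exact_mod_cast this
    have hA : (0:ℝ) < a m ^ (2*θ) / (m : ℝ) ^ (θ - 1) := by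
      have h1 : (0:ℝ) < a m ^ (2*θ) := Real.rpow_pos_of_pos (ha m (by omega)) _
      have h2 : (0:ℝ) < (m:ℝ) ^ (θ-1) := Real.rpow_pos_of_pos hmpos _
      positivity
    have hre : ∑ k ∈ Finset.Icc m M, w k = ∑ k ∈ Finset.range (M + 1 - m), w (m + k) := by
      rw [← Finset.Ico_add_one_right_eq_Icc, Finset.sum_Ico_eq_sum_range]
    have hle1 : ENNReal.ofReal (∑ k ∈ Finset.Icc m M, w k) ≤
        ∑' k : ℕ, ENNReal.ofReal (((m : ℝ) + k) ^ θ * τ (m + k) / a (m + k) ^ (2 * θ)) := by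
      rw [hre, ENNReal.ofReal_sum_of_nonneg (fun i _ => hw0 (m + i) (by omega))]
      have heq : ∀ i : ℕ, ENNReal.ofReal (w (m + i)) =
          ENNReal.ofReal (((m : ℝ) + i) ^ θ * τ (m + i) / a (m + i) ^ (2 * θ)) := by
        intro i
        congr 1
        rw [hwdef]
        push_cast
        ring_nf
      calc ∑ i ∈ Finset.range (M + 1 - m), ENNReal.ofReal (w (m + i))
          = ∑ i ∈ Finset.range (M + 1 - m),
            ENNReal.ofReal (((m : ℝ) + i) ^ θ * τ (m + i) / a (m + i) ^ (2 * θ)) :=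
            Finset.sum_congr rfl (fun i _ => heq i)
        _ ≤ _ := ENNReal.sum_le_tsum _
    have hle2 := hcond1 m hm
    have hle3 : ENNReal.ofReal ((a m ^ (2*θ) / (m:ℝ) ^ (θ-1)) * ∑ k ∈ Finset.Icc m M, w k) ≤
        ENNReal.ofReal (C * ∑ j ∈ Finset.Icc 1 (m - 1), (j : ℝ) * τ j) := by
      rw [ENNReal.ofReal_mul hA.le]
      exact le_trans (mul_le_mul_right hle1 _) hle2
    have hle4 : (a m ^ (2*θ) / (m:ℝ) ^ (θ-1)) * ∑ k ∈ Finset.Icc m M, w k ≤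
        C * ∑ j ∈ Finset.Icc 1 (m - 1), (j : ℝ) * τ j := by
      have hrhs : 0 ≤ C * ∑ j ∈ Finset.Icc 1 (m - 1), (j : ℝ) * τ j := by
        have := hS0 (m-1)
        rw [hSdef] at this
        simp only at this
        positivity
      exact (ENNReal.ofReal_le_ofReal_iff hrhs).1 hle3
    rw [le_div_iff₀ hA]
    linarith [hle4]
  -- Fact B
  set K₃ : ℝ := ε ^ 2 * (S (n₁ - 1) + Sig) / c with hK₃def
  have hK₃0 : 0 ≤ K₃ := by
    have h1 := hS0 (n₁ - 1)
    have h2 : (0:ℝ) ≤ ε ^ 2 := sq_nonneg ε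
    exact div_nonneg (by nlinarith) hc.le
  have factB : ∀ m, n₁ ≤ m → T m ≤ K₃ * (a m ^ 2 / (m : ℝ)) := by
    intro m hm
    have hm1 : 1 ≤ m := by omega
    have hmpos : (0:ℝ) < (m:ℝ) := by
      have : 0 < m := by omega
      exact_mod_cast this
    have hampos := ha m hm1
    have htel : T m = T n₁ + ∑ l ∈ Finset.Ico n₁ m, (T (l+1) - T l) := by
      rw [Finset.sum_Ico_eq_sub _ hm, Finset.sum_range_sub (fun l => T l),
        Finset.sum_range_sub (fun l => T l)]
      ring
    have hTn₁ : T n₁ ≤ ε^2 * (a m ^2 * S (n₁ - 1) / (c * m)) := by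
      have h1 := hTle n₁ (by omega)
      have h2 := hstar n₁ (by omega) m hm
      have h3 : a n₁ ^ 2 ≤ a m ^2 * S (n₁ - 1) / (c * m) := by
        rw [le_div_iff₀ (by positivity)]
        nlinarith
      nlinarith [sq_nonneg ε, sq_nonneg (a n₁)]
    have hinc : ∀ l ∈ Finset.Ico n₁ m, T (l+1) - T l ≤ ε^2 * (a m ^2 / (c*m)) * (S l * q l) := by
      intro l hl
      rw [Finset.mem_Ico] at hl
      have h1 := hdle l (by omega)
      have h2 := hstar (l+1) (by omega) m (by omega)
      have h2' : c * m * a (l+1) ^ 2 ≤ a m ^2 * S l := by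
        simpa using h2
      have h3 : a (l+1) ^2 ≤ a m ^2 * S l / (c * m) := by
        rw [le_div_iff₀ (by positivity)]
        nlinarith
      have h4 : (ε * a (l+1))^2 * q l ≤ ε^2 * (a m^2 * S l/(c*m)) * q l := by
        have h5 := mul_le_mul_of_nonneg_right h3 (hq0 l)
        have h6 := mul_le_mul_of_nonneg_left h5 (sq_nonneg ε)
        calc (ε * a (l+1))^2 * q l = ε^2 * (a (l+1)^2 * q l) := by ring
          _ ≤ ε^2 * (a m ^2 * S l / (c * ↑m) * q l) := h6
          _ = ε^2 * (a m^2 * S l/(c*m)) * q l := by ring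
      refine h1.trans (h4.trans ?_)
      apply le_of_eq
      field_simp
    have hsum : ∑ l ∈ Finset.Ico n₁ m, (T (l+1) - T l) ≤
        ε^2 * (a m ^2/(c*m)) * ∑ l ∈ Finset.Ico n₁ m, S l * q l := by
      rw [Finset.mul_sum]
      exact Finset.sum_le_sum hinc
    have hsub : ∑ l ∈ Finset.Ico n₁ m, S l * q l ≤ Sig := by
      refine le_trans ?_ (factA m)
      apply Finset.sum_le_sum_of_subset_of_nonneg
      · apply Finset.Ico_subset_Ico (by omega) le_rfl
      · intro l _ _
        exact mul_nonneg (hS0 l) (hq0 l)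
    have hfin : T m ≤ ε^2 * (a m^2 * S (n₁-1)/(c*m)) + ε^2*(a m^2/(c*m)) * Sig := by
      have h5 : ε^2*(a m^2/(c*m)) * ∑ l ∈ Finset.Ico n₁ m, S l * q l
          ≤ ε^2*(a m^2/(c*m)) * Sig := by
        apply mul_le_mul_of_nonneg_left hsub
        positivity
      linarith [htel, hsum, hTn₁]
    refine hfin.trans (le_of_eq ?_)
    rw [hK₃def]
    field_simp
  -- the key partial-sum estimate
  set Z : ℕ → ℝ := fun l => T (l + 1) ^ (θ - 1) * (T (l + 1) - T l) with hZdef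
  set c₂ : ℝ := ((ε * a n₁) ^ 2) ^ θ with hc₂def
  set K₅ : ℝ := K₃ ^ (θ - 1) * ε ^ 2 * C with hK₅def
  have hZ0 : ∀ l, 1 ≤ l → 0 ≤ Z l := by
    intro l hl
    have h1 : (0:ℝ) ≤ T (l+1) ^ (θ-1) := Real.rpow_nonneg (hT0 _) _
    have h2 : 0 ≤ T (l+1) - T l := sub_nonneg.2 (hTmono l (l+1) hl (by omega))
    exact mul_nonneg h1 h2
  have hc₂0 : 0 ≤ c₂ := Real.rpow_nonneg (sq_nonneg _) _
  have hTk : ∀ k, n₁ ≤ k → T k ^ θ ≤ c₂ + θ * ∑ l ∈ Finset.Ico n₁ k, Z l := by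
    intro k hk
    have htel : T k ^ θ - T n₁ ^ θ = ∑ l ∈ Finset.Ico n₁ k, (T (l+1) ^ θ - T l ^ θ) := by
      rw [Finset.sum_Ico_eq_sub _ hk, Finset.sum_range_sub (fun l => T l ^ θ),
        Finset.sum_range_sub (fun l => T l ^ θ)]
      ring
    have h1 : T n₁ ^ θ ≤ c₂ := Real.rpow_le_rpow (hT0 n₁) (hTle n₁ (by omega)) hθ0.le
    have h2 : ∑ l ∈ Finset.Ico n₁ k, (T (l+1) ^ θ - T l ^ θ) ≤
        θ * ∑ l ∈ Finset.Ico n₁ k, Z l := by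
      rw [Finset.mul_sum]
      apply Finset.sum_le_sum
      intro l hl
      rw [Finset.mem_Ico] at hl
      have hdb := aux_rpow_diff_le hθ (hT0 l) (hTmono l (l+1) (by omega) (by omega))
      calc T (l+1) ^ θ - T l ^ θ ≤ θ * T (l+1) ^ (θ-1) * (T (l+1) - T l) := hdb
        _ = θ * Z l := by rw [hZdef]; ring
    linarith
  have hZV : ∀ l, n₁ ≤ l →
      Z l * (C * S l / (a (l+1) ^ (2 * θ) / ((l+1 : ℕ) : ℝ) ^ (θ - 1))) ≤ K₅ * (S l * q l) := by
    intro l hl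
    have hl1 : (1:ℕ) ≤ l := by omega
    have ham : (0:ℝ) < a (l+1) := ha (l+1) (by omega)
    have hm' : (0:ℝ) < ((l+1 : ℕ) : ℝ) := by exact_mod_cast Nat.succ_pos l
    set A2 : ℝ := a (l+1) ^ 2 with hA2def
    have hA2 : (0:ℝ) < A2 := by positivity
    have e0 : a (l+1) ^ (2 * θ) = A2 ^ θ := by
      rw [hA2def, show (2*θ) = ((2:ℕ):ℝ)*θ by norm_num, Real.rpow_natCast_mul ham.le]
    have e1 : A2 ^ θ = A2 ^ (θ - 1) * A2 := by
      rw [← Real.rpow_add_one hA2.ne' (θ - 1), sub_add_cancel]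
    have e2 : (K₃ * (A2 / ((l+1:ℕ):ℝ))) ^ (θ-1)
        = K₃ ^ (θ-1) * (A2 ^ (θ-1) / (((l+1:ℕ):ℝ)) ^ (θ-1)) := by
      rw [Real.mul_rpow hK₃0 (by positivity), Real.div_rpow hA2.le hm'.le]
    have hZle : Z l ≤ (K₃ * (A2 / ((l+1:ℕ):ℝ))) ^ (θ-1) * ((ε * a (l+1)) ^ 2 * q l) := by
      apply mul_le_mul
      · exact Real.rpow_le_rpow (hT0 _) (factB (l+1) (by omega)) (by linarith)
      · exact hdle l hl1
      · exact sub_nonneg.2 (hTmono l (l+1) hl1 (by omega))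
      · exact Real.rpow_nonneg (by positivity) _
    have hV0 : 0 ≤ C * S l / (a (l+1) ^ (2 * θ) / ((l+1 : ℕ) : ℝ) ^ (θ - 1)) := by
      have h1 := hS0 l
      have h2 : (0:ℝ) < a (l+1) ^ (2*θ) := Real.rpow_pos_of_pos ham _
      have h3 : (0:ℝ) < (((l+1:ℕ)):ℝ) ^ (θ-1) := Real.rpow_pos_of_pos hm' _
      positivity
    calc Z l * (C * S l / (a (l+1) ^ (2 * θ) / ((l+1 : ℕ) : ℝ) ^ (θ - 1)))
        ≤ ((K₃ * (A2 / ((l+1:ℕ):ℝ))) ^ (θ-1) * ((ε * a (l+1)) ^ 2 * q l)) *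
            (C * S l / (a (l+1) ^ (2 * θ) / ((l+1 : ℕ) : ℝ) ^ (θ - 1))) :=
          mul_le_mul_of_nonneg_right hZle hV0
      _ = K₅ * (S l * q l) := by
          rw [e2, e0, e1, hK₅def]
          have h4 : A2 ^ (θ-1) ≠ 0 := ne_of_gt (Real.rpow_pos_of_pos hA2 _)
          have h5 : (((l+1:ℕ)):ℝ) ^ (θ-1) ≠ 0 := ne_of_gt (Real.rpow_pos_of_pos hm' _)
          have h6 : A2 = a (l+1) ^2 := hA2def
          field_simp
          ring
  have key : ∀ M : ℕ, ∑ k ∈ Finset.Icc n₁ M, w k * T k ^ θ ≤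
      c₂ * (C * S (n₁-1) / (a n₁ ^ (2 * θ) / (n₁ : ℝ) ^ (θ - 1))) + θ * (K₅ * Sig) := by
    intro M
    have step1 : ∑ k ∈ Finset.Icc n₁ M, w k * T k ^ θ ≤
        c₂ * ∑ k ∈ Finset.Icc n₁ M, w k
          + θ * ∑ k ∈ Finset.Icc n₁ M, ∑ l ∈ Finset.Ico n₁ M,
              (if l < k then w k * Z l else 0) := by
      rw [Finset.mul_sum, Finset.mul_sum, ← Finset.sum_add_distrib]
      apply Finset.sum_le_sum
      intro k hk
      rw [Finset.mem_Icc] at hk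
      have h1 : w k * T k ^ θ ≤ w k * (c₂ + θ * ∑ l ∈ Finset.Ico n₁ k, Z l) :=
        mul_le_mul_of_nonneg_left (hTk k hk.1) (hw0 k (by omega))
      have h2 : ∑ l ∈ Finset.Ico n₁ k, Z l
          = ∑ l ∈ Finset.Ico n₁ M, (if l < k then Z l else 0) := by
        rw [← Finset.sum_filter]
        apply Finset.sum_congr
        · ext l
          simp only [Finset.mem_filter, Finset.mem_Ico]
          omega
        · intros; rfl
      have h3 : ∑ l ∈ Finset.Ico n₁ M, (if l < k then w k * Z l else 0)
          = w k * ∑ l ∈ Finset.Ico n₁ M, (if l < k then Z l else 0) := by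
        rw [Finset.mul_sum]
        apply Finset.sum_congr rfl
        intro l _
        split <;> ring
      rw [h3, ← h2]
      linarith [h1]
    have step2 : ∑ k ∈ Finset.Icc n₁ M, ∑ l ∈ Finset.Ico n₁ M,
        (if l < k then w k * Z l else 0) ≤ K₅ * Sig := by
      rw [Finset.sum_comm]
      have hinner : ∀ l ∈ Finset.Ico n₁ M,
          ∑ k ∈ Finset.Icc n₁ M, (if l < k then w k * Z l else 0)
          = Z l * ∑ k ∈ Finset.Icc (l+1) M, w k := by
        intro l hl
        rw [Finset.mem_Ico] at hl
        rw [Finset.mul_sum, ← Finset.sum_filter]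
        rw [show (Finset.Icc n₁ M).filter (fun k => l < k) = Finset.Icc (l+1) M by
          ext k
          simp only [Finset.mem_filter, Finset.mem_Icc]
          omega]
        apply Finset.sum_congr rfl
        intro k _
        ring
      calc ∑ l ∈ Finset.Ico n₁ M, ∑ k ∈ Finset.Icc n₁ M, (if l < k then w k * Z l else 0)
          = ∑ l ∈ Finset.Ico n₁ M, Z l * ∑ k ∈ Finset.Icc (l+1) M, w k :=
            Finset.sum_congr rfl hinner
        _ ≤ ∑ l ∈ Finset.Ico n₁ M, K₅ * (S l * q l) := by
            apply Finset.sum_le_sum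
            intro l hl
            rw [Finset.mem_Ico] at hl
            have h1 : ∑ k ∈ Finset.Icc (l+1) M, w k ≤
                C * S ((l+1)-1) / (a (l+1) ^ (2 * θ) / ((l+1:ℕ) : ℝ) ^ (θ - 1)) :=
              factC (l+1) (by omega) M
            have h1' : ∑ k ∈ Finset.Icc (l+1) M, w k ≤
                C * S l / (a (l+1) ^ (2 * θ) / ((l+1:ℕ) : ℝ) ^ (θ - 1)) := by
              simpa using h1
            calc Z l * ∑ k ∈ Finset.Icc (l+1) M, w k
                ≤ Z l * (C * S l / (a (l+1) ^ (2 * θ) / ((l+1:ℕ) : ℝ) ^ (θ - 1))) :=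
                  mul_le_mul_of_nonneg_left h1' (hZ0 l (by omega))
              _ ≤ K₅ * (S l * q l) := hZV l hl.1
        _ = K₅ * ∑ l ∈ Finset.Ico n₁ M, S l * q l := by rw [Finset.mul_sum]
        _ ≤ K₅ * Sig := by
            apply mul_le_mul_of_nonneg_left _ (by positivity)
            refine le_trans ?_ (factA M)
            apply Finset.sum_le_sum_of_subset_of_nonneg
            · exact Finset.Ico_subset_Ico (by omega) le_rfl
            · intro l _ _
              exact mul_nonneg (hS0 l) (hq0 l)
    have hfC := factC n₁ hn₁N M
    have h6 : c₂ * ∑ k ∈ Finset.Icc n₁ M, w k ≤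
        c₂ * (C * S (n₁-1) / (a n₁ ^ (2 * θ) / (n₁ : ℝ) ^ (θ - 1))) :=
      mul_le_mul_of_nonneg_left hfC hc₂0
    have h7 : θ * ∑ k ∈ Finset.Icc n₁ M, ∑ l ∈ Finset.Ico n₁ M,
        (if l < k then w k * Z l else 0) ≤ θ * (K₅ * Sig) :=
      mul_le_mul_of_nonneg_left step2 hθ0.le
    calc ∑ k ∈ Finset.Icc n₁ M, w k * T k ^ θ ≤ _ := step1
      _ ≤ _ := add_le_add h6 h7
  -- final assembly
  set KB : ℝ := c₂ * (C * S (n₁-1) / (a n₁ ^ (2 * θ) / (n₁ : ℝ) ^ (θ - 1))) + θ * (K₅ * Sig)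
    with hKBdef
  set K₆ : ℝ := θ ^ θ / ε ^ (2*θ) with hK₆def
  have hK₆0 : 0 ≤ K₆ := by
    have h1 : (0:ℝ) ≤ θ ^ θ := Real.rpow_nonneg hθ0.le _
    have h2 : (0:ℝ) < ε ^ (2*θ) := Real.rpow_pos_of_pos hε _
    rw [hK₆def]
    positivity
  set f : ℕ → ℝ := fun n =>
      if T (n+1) = 0 then 0
      else τ (n + 1) * Real.exp (-(ε ^ 2 * a (n + 1) ^ 2) / ((n + 1 : ℝ) * T (n+1))) with hfdef
  set F : ℕ → ℝ := fun n => if n + 1 < n₁ then τ (n+1) else K₆ * (w (n+1) * T (n+1) ^ θ)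
    with hFdef
  have hf0 : ∀ n, 0 ≤ f n := by
    intro n
    rw [hfdef]
    simp only
    split
    · exact le_refl 0
    · have h1 := hτ (n+1) (by omega)
      positivity
  have hF0 : ∀ n, 0 ≤ F n := by
    intro n
    rw [hFdef]
    simp only
    split
    · exact hτ (n+1) (by omega)
    · have h1 := hw0 (n+1) (by omega)
      have h2 : (0:ℝ) ≤ T (n+1) ^ θ := Real.rpow_nonneg (hT0 _) _
      positivity
  have hfle : ∀ n, f n ≤ F n := by
    intro n
    by_cases hTz : T (n+1) = 0
    · rw [hfdef]
      simp only [if_pos hTz]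
      exact hF0 n
    · have hTpos : 0 < T (n+1) := lt_of_le_of_ne (hT0 _) (Ne.symm hTz)
      have hkpos : (0:ℝ) < (n+1 : ℝ) := by positivity
      have hapos : 0 < a (n+1) := ha (n+1) (by omega)
      set x : ℝ := ε^2 * a (n+1)^2 / ((n+1:ℝ) * T (n+1)) with hxdef
      have hxpos : 0 < x := by rw [hxdef]; positivity
      have harg : -(ε ^ 2 * a (n + 1) ^ 2) / ((n + 1 : ℝ) * T (n+1)) = -x := by
        rw [hxdef, neg_div]
      have hfval : f n = τ (n+1) * Real.exp (-x) := by
        rw [hfdef]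
        simp only [if_neg hTz]
        rw [harg]
      by_cases hcase : n + 1 < n₁
      · rw [hfval, hFdef]
        simp only [if_pos hcase]
        have h1 : Real.exp (-x) ≤ 1 := Real.exp_le_one_iff.2 (by linarith)
        have h2 := hτ (n+1) (by omega)
        nlinarith [Real.exp_pos (-x)]
      · rw [hfval, hFdef]
        simp only [if_neg hcase]
        have h1 : τ (n+1) * Real.exp (-x) ≤ τ (n+1) * (θ ^ θ / x ^ θ) :=
          mul_le_mul_of_nonneg_left (aux_exp_neg_le hθ hxpos) (hτ (n+1) (by omega))
        refine h1.trans (le_of_eq ?_)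
        have e1 : x ^ θ = (ε^2 * a (n+1)^2) ^ θ / (((n+1:ℝ)) ^ θ * T (n+1) ^ θ) := by
          rw [hxdef, Real.div_rpow (by positivity) (by positivity),
            Real.mul_rpow hkpos.le hTpos.le]
        have e2 : (ε^2 * a (n+1)^2) ^ θ = ε ^ (2*θ) * a (n+1) ^ (2*θ) := by
          rw [Real.mul_rpow (by positivity) (by positivity),
            show (2*θ) = ((2:ℕ):ℝ)*θ by norm_num,
            Real.rpow_natCast_mul hε.le, Real.rpow_natCast_mul hapos.le]
        rw [e1, e2, hK₆def, hwdef]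
        have h4 : ((n+1:ℝ)) ^ θ ≠ 0 := ne_of_gt (Real.rpow_pos_of_pos hkpos _)
        have h5 : T (n+1) ^ θ ≠ 0 := ne_of_gt (Real.rpow_pos_of_pos hTpos _)
        have h6 : ε ^ (2*θ) ≠ 0 := ne_of_gt (Real.rpow_pos_of_pos hε _)
        have h7 : a (n+1) ^ (2*θ) ≠ 0 := ne_of_gt (Real.rpow_pos_of_pos hapos _)
        have h8 : ((n+1:ℕ):ℝ) = ((n:ℝ)+1) := by push_cast; ring
        simp only
        rw [h8]
        field_simp
  apply summable_of_sum_range_le (c := (∑ n ∈ Finset.range n₁, τ (n+1)) + K₆ * KB) hf0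
  intro M
  have hsplit : ∑ n ∈ Finset.range M, f n ≤ ∑ n ∈ Finset.range M, F n :=
    Finset.sum_le_sum (fun n _ => hfle n)
  refine hsplit.trans ?_
  rw [hFdef]
  rw [Finset.sum_ite]
  apply add_le_add
  · apply Finset.sum_le_sum_of_subset_of_nonneg
    · intro n hn
      rw [Finset.mem_filter, Finset.mem_range] at hn
      rw [Finset.mem_range]
      omega
    · intro n _ _
      exact hτ (n+1) (by omega)
  · rw [← Finset.mul_sum]
    apply mul_le_mul_of_nonneg_left _ hK₆0
    have himg : ∑ n ∈ (Finset.range M).filter (fun n => ¬ n + 1 < n₁), (w (n+1) * T (n+1) ^ θ)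
        = ∑ k ∈ ((Finset.range M).filter (fun n => ¬ n + 1 < n₁)).image (· + 1),
            (w k * T k ^ θ) := by
      rw [Finset.sum_image]
      intro x _ y _ h
      simp only at h
      omega
    rw [himg, hKBdef]
    refine le_trans ?_ (key M)
    apply Finset.sum_le_sum_of_subset_of_nonneg
    · intro k hk
      simp only [Finset.mem_image, Finset.mem_filter, Finset.mem_range] at hk
      obtain ⟨n, ⟨hn1, hn2⟩, rfl⟩ := hk
      rw [Finset.mem_Icc]
      omega
    · intro k hk _
      rw [Finset.mem_Icc] at hk
      exact mul_nonneg (hw0 k (by omega)) (Real.rpow_nonneg (hT0 _) _)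
end

section
/- Let X be a real random variable with E[X²·(log⁺log⁺|X|)^{1+δ} / log⁺|X|] < ∞ for some δ > 0. Then for every ε > 0 one has ∑_{n=2}^∞ n^{−1−ε²/T_{ε,n}} < ∞, where T_{ε,n} = E[X²·1_{|X| < ε(n log n)^{1/2}}] (with the convention that the summand is 0 when T_{ε,n} = 0). -/
set_option maxHeartbeats 1000000

open MeasureTheory Filter
open scoped ProbabilityTheory

private lemma lemA {δ : ℝ} (hδ : 0 < δ) {x M : ℝ} (hx : 0 ≤ x) (hxM : x ≤ M) :
    Real.log (2 + x) / Real.log (2 + Real.log (2 + x)) ^ (1 + δ) ≤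
      2 ^ (1 + δ) * Real.log (2 + M) / Real.log (2 + Real.log (2 + M)) ^ (1 + δ)
        + Real.sqrt (Real.log (2 + M)) / Real.log 2 ^ (1 + δ) := by
  have h2 : (0:ℝ) < Real.log 2 := Real.log_pos (by norm_num)
  have hδ1 : (0:ℝ) ≤ 1 + δ := by linarith
  have hu2 : Real.log 2 ≤ Real.log (2 + x) := Real.log_le_log (by norm_num) (by linarith)
  have hL2 : Real.log 2 ≤ Real.log (2 + M) := Real.log_le_log (by norm_num) (by linarith)
  have hupos : 0 < Real.log (2 + x) := lt_of_lt_of_le h2 hu2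
  have hLpos : 0 < Real.log (2 + M) := lt_of_lt_of_le h2 hL2
  have huL : Real.log (2 + x) ≤ Real.log (2 + M) := Real.log_le_log (by linarith) (by linarith)
  set u := Real.log (2 + x) with hudef
  set L := Real.log (2 + M) with hLdef
  have hlu2 : Real.log 2 ≤ Real.log (2 + u) := Real.log_le_log (by norm_num) (by linarith)
  have hlupos : 0 < Real.log (2 + u) := lt_of_lt_of_le h2 hlu2
  have hlL2 : Real.log 2 ≤ Real.log (2 + L) := Real.log_le_log (by norm_num) (by linarith)
  have hlLpos : 0 < Real.log (2 + L) := lt_of_lt_of_le h2 hlL2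
  rcases le_or_gt u (Real.sqrt L) with hc | hc
  · have t1 : u / Real.log (2 + u) ^ (1 + δ) ≤ Real.sqrt L / Real.log 2 ^ (1 + δ) :=
      div_le_div₀ (Real.sqrt_nonneg L) hc (Real.rpow_pos_of_pos h2 _)
        (Real.rpow_le_rpow h2.le hlu2 hδ1)
    have t2 : 0 ≤ 2 ^ (1 + δ) * L / Real.log (2 + L) ^ (1 + δ) := by positivity
    linarith
  · have hsq : Real.sqrt (2 + L) ≤ 2 + u := by
      have h1 : Real.sqrt (2 + L) ≤ 2 + Real.sqrt L := by
        rw [show (2:ℝ) + Real.sqrt L = Real.sqrt ((2 + Real.sqrt L)^2) from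
          (Real.sqrt_sq (by positivity)).symm]
        apply Real.sqrt_le_sqrt
        nlinarith [Real.sq_sqrt hLpos.le, Real.sqrt_nonneg L]
      linarith
    have hhalf : Real.log (2 + L) / 2 ≤ Real.log (2 + u) := by
      calc Real.log (2 + L) / 2 = Real.log (Real.sqrt (2 + L)) :=
            (Real.log_sqrt (x := 2 + L) (by linarith)).symm
        _ ≤ Real.log (2 + u) := Real.log_le_log (Real.sqrt_pos.2 (by linarith)) hsq
    have hd : (Real.log (2 + L) / 2) ^ (1 + δ) ≤ Real.log (2 + u) ^ (1 + δ) :=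
      Real.rpow_le_rpow (by positivity) hhalf hδ1
    have e1 : (Real.log (2 + L) / 2) ^ (1 + δ)
        = Real.log (2 + L) ^ (1 + δ) / 2 ^ (1 + δ) :=
      Real.div_rpow hlLpos.le (by norm_num : (0:ℝ) ≤ 2) (1 + δ)
    have h3 : u / Real.log (2 + u) ^ (1 + δ) ≤ u / ((Real.log (2 + L) / 2) ^ (1 + δ)) :=
      div_le_div_of_nonneg_left hupos.le (by positivity) hd
    have key : u / Real.log (2 + u) ^ (1 + δ) ≤ 2 ^ (1 + δ) * L / Real.log (2 + L) ^ (1 + δ) := by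
      calc u / Real.log (2 + u) ^ (1 + δ) ≤ u / ((Real.log (2 + L) / 2) ^ (1 + δ)) := h3
        _ = u * 2 ^ (1 + δ) / Real.log (2 + L) ^ (1 + δ) := by rw [e1, div_div_eq_mul_div]
        _ ≤ 2 ^ (1 + δ) * L / Real.log (2 + L) ^ (1 + δ) := by
            rw [mul_comm]
            gcongr
    have t2 : 0 ≤ Real.sqrt L / Real.log 2 ^ (1 + δ) := by positivity
    linarith

private lemma sumc : Summable (fun n : ℕ => 1 / (((n:ℝ) + 2) * Real.log ((n:ℝ) + 2) ^ 2)) := by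
  have h2 : (0:ℝ) < Real.log 2 := Real.log_pos (by norm_num)
  have hlog : ∀ n : ℕ, (0:ℝ) < Real.log ((n:ℝ) + 2) := by
    intro n
    apply lt_of_lt_of_le h2
    apply Real.log_le_log (by norm_num)
    have : (0:ℝ) ≤ (n:ℝ) := Nat.cast_nonneg n
    linarith
  have hd : Summable (fun n : ℕ => 1 / Real.log ((n:ℝ) + 2) - 1 / Real.log ((n:ℝ) + 3)) := by
    apply summable_of_sum_range_le (c := 1 / Real.log 2)
    · intro n
      have h1 := hlog n
      have h3 : Real.log ((n:ℝ) + 2) ≤ Real.log ((n:ℝ) + 3) :=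
        Real.log_le_log (by positivity) (by linarith)
      have h4 : (0:ℝ) < Real.log ((n:ℝ) + 3) := lt_of_lt_of_le h1 h3
      have := one_div_le_one_div_of_le h1 h3
      linarith
    · intro n
      have e : ∀ m : ℕ, (1 : ℝ) / Real.log ((m:ℝ) + 2) - 1 / Real.log ((m:ℝ) + 3)
          = (fun k : ℕ => 1 / Real.log ((k:ℝ) + 2)) m
            - (fun k : ℕ => 1 / Real.log ((k:ℝ) + 2)) (m + 1) := by
        intro m; push_cast; ring_nf
      calc ∑ i ∈ Finset.range n, (1 / Real.log ((i:ℝ) + 2) - 1 / Real.log ((i:ℝ) + 3))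
          = ∑ i ∈ Finset.range n, ((fun k : ℕ => 1 / Real.log ((k:ℝ) + 2)) i
              - (fun k : ℕ => 1 / Real.log ((k:ℝ) + 2)) (i + 1)) := by
            exact Finset.sum_congr rfl fun i _ => e i
        _ = 1 / Real.log ((0:ℕ) + 2) - 1 / Real.log ((n:ℝ) + 2) := by
            rw [Finset.sum_range_sub']
        _ ≤ 1 / Real.log 2 := by
            have := hlog n
            have : 0 ≤ 1 / Real.log ((n:ℝ) + 2) := by positivity
            norm_num
            linarith
  have h3 : Summable (fun n : ℕ => 1 / (((n:ℝ) + 3) * Real.log ((n:ℝ) + 3) ^ 2)) := by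
    apply Summable.of_nonneg_of_le _ _ hd
    · intro n
      have h4 : (0:ℝ) < Real.log ((n:ℝ) + 3) := lt_of_lt_of_le (hlog n)
        (Real.log_le_log (by positivity) (by linarith))
      positivity
    · intro n
      set a := Real.log ((n:ℝ) + 2) with ha
      set b := Real.log ((n:ℝ) + 3) with hb
      have h1 : 0 < a := hlog n
      have hab : a ≤ b := Real.log_le_log (by positivity) (by linarith)
      have h4 : 0 < b := lt_of_lt_of_le h1 hab
      have hgap : 1 / ((n:ℝ) + 3) ≤ b - a := by
        have hx : (0:ℝ) < ((n:ℝ) + 2) / ((n:ℝ) + 3) := by positivity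
        have := Real.log_le_sub_one_of_pos hx
        rw [Real.log_div (by positivity) (by positivity)] at this
        have hn3 : (0:ℝ) < (n:ℝ) + 3 := by positivity
        have e2 : ((n:ℝ) + 2) / ((n:ℝ) + 3) - 1 = -(1 / ((n:ℝ) + 3)) := by
          field_simp
          norm_num
        rw [e2] at this
        linarith
      have e : 1 / a - 1 / b = (b - a) / (a * b) := by field_simp
      have e2 : 1 / (((n:ℝ) + 3) * b ^ 2) = (1 / ((n:ℝ) + 3)) / (b * b) := by
        have hn3 : ((n:ℝ) + 3) ≠ 0 := by positivity
        rw [pow_two]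
        field_simp
      rw [e, e2]
      apply div_le_div₀ (by linarith) hgap (by positivity)
      nlinarith
  have := (summable_nat_add_iff (f := fun n : ℕ => 1 / (((n:ℝ) + 2) * Real.log ((n:ℝ) + 2) ^ 2)) 1).1
  apply this
  apply h3.congr
  intro n
  push_cast
  ring_nf

private lemma core {δ ε I s m T : ℝ} (hδ : 0 < δ) (hε : 0 < ε) (hI : 0 ≤ I)
    (hs1 : 1 ≤ s) (ht2 : 2 * Real.log 2 ≤ Real.log s)
    (h3 : 4 * (I * 2 ^ (3 + 2 * δ)) / ε ^ 2 ≤ Real.log s ^ δ)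
    (h4 : 16 * (I * Real.sqrt 2 / Real.log 2 ^ (1 + δ)) / ε ^ 2 ≤ s ^ ((1:ℝ)/4))
    (hLub : Real.log (2 + m) ≤ 2 * s) (hLlb : s / 2 ≤ Real.log (2 + m))
    (hT : T ≤ (2 ^ (1 + δ) * Real.log (2 + m) / Real.log (2 + Real.log (2 + m)) ^ (1 + δ)
      + Real.sqrt (Real.log (2 + m)) / Real.log 2 ^ (1 + δ)) * I) :
    T ≤ ε ^ 2 * s / (2 * Real.log s) := by
  have hl2 : (0:ℝ) < Real.log 2 := Real.log_pos (by norm_num)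
  set L := Real.log (2 + m) with hLdef
  set t := Real.log s with htdef
  have ht0 : 0 < t := lt_of_lt_of_le (by positivity) ht2
  have hs0 : 0 < s := by linarith
  have hL0 : 0 < L := by linarith
  have hΛ : t / 2 ≤ Real.log (2 + L) := by
    have e1 : Real.log (s / 2) = t - Real.log 2 := by
      rw [htdef, Real.log_div (ne_of_gt hs0) two_ne_zero]
    have i1 : Real.log (s / 2) ≤ Real.log L := Real.log_le_log (by positivity) hLlb
    have i2 : Real.log L ≤ Real.log (2 + L) := Real.log_le_log hL0 (by linarith)
    linarith
  have hΛ0 : 0 < Real.log (2 + L) := by linarith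
  set P := (2:ℝ) ^ (1 + δ) with hPdef
  have hP0 : 0 < P := Real.rpow_pos_of_pos two_pos _
  set tδ := t ^ δ with htδdef
  have htδ0 : 0 < tδ := Real.rpow_pos_of_pos ht0 _
  have hden : t * tδ / P ≤ Real.log (2 + L) ^ (1 + δ) := by
    have e1 : (t / 2) ^ (1 + δ) = t ^ (1 + δ) / P :=
      Real.div_rpow ht0.le (by norm_num : (0:ℝ) ≤ 2) (1 + δ)
    have e2 : t ^ (1 + δ) = t * tδ := by rw [Real.rpow_add ht0, Real.rpow_one, htδdef]
    calc t * tδ / P = (t / 2) ^ (1 + δ) := by rw [e1, e2]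
      _ ≤ Real.log (2 + L) ^ (1 + δ) := Real.rpow_le_rpow (by positivity) hΛ (by linarith)
  have hterm1 : P * L / Real.log (2 + L) ^ (1 + δ) * I ≤ ε ^ 2 * s / (4 * t) := by
    have i1 : P * L / Real.log (2 + L) ^ (1 + δ) ≤ P * (2 * s) / (t * tδ / P) :=
      div_le_div₀ (by positivity) (by nlinarith) (by positivity) hden
    have e3 : P * (2 * s) / (t * tδ / P) = 2 * P ^ 2 * s / (t * tδ) := by
      field_simp
    have h3' : 8 * P ^ 2 * I ≤ ε ^ 2 * tδ := by
      have hh := (div_le_iff₀ (by positivity : (0:ℝ) < ε ^ 2)).1 h3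
      have e4 : (2:ℝ) ^ (3 + 2 * δ) = 2 * P ^ 2 := by
        rw [hPdef, pow_two, ← Real.rpow_add two_pos,
          show (1 + δ) + (1 + δ) = 2 + 2 * δ by ring,
          show (3 + 2 * δ) = 1 + (2 + 2 * δ) by ring, Real.rpow_add two_pos, Real.rpow_one]
      nlinarith
    have i2 : 2 * P ^ 2 * s / (t * tδ) * I ≤ ε ^ 2 * s / (4 * t) := by
      rw [div_mul_eq_mul_div, div_le_div_iff₀ (by positivity) (by positivity)]
      nlinarith [mul_nonneg (mul_nonneg hs0.le ht0.le) (sub_nonneg.2 h3')]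
    calc P * L / Real.log (2 + L) ^ (1 + δ) * I ≤ P * (2 * s) / (t * tδ / P) * I :=
          mul_le_mul_of_nonneg_right i1 hI
      _ = 2 * P ^ 2 * s / (t * tδ) * I := by rw [e3]
      _ ≤ ε ^ 2 * s / (4 * t) := i2
  have hQ : 0 < Real.log 2 ^ (1 + δ) := Real.rpow_pos_of_pos hl2 _
  have hterm2 : Real.sqrt L / Real.log 2 ^ (1 + δ) * I ≤ ε ^ 2 * s / (4 * t) := by
    set r := s ^ ((1:ℝ)/4) with hrdef
    have hr0 : 0 < r := Real.rpow_pos_of_pos hs0 _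
    have hr1 : 1 ≤ r := by
      calc (1:ℝ) = (1:ℝ) ^ ((1:ℝ)/4) := (Real.one_rpow _).symm
        _ ≤ r := Real.rpow_le_rpow zero_le_one hs1 (by norm_num)
    have hs_eq : r ^ (4:ℕ) = s := by
      rw [hrdef, ← Real.rpow_natCast (s ^ ((1:ℝ)/4)) 4, ← Real.rpow_mul hs0.le]
      norm_num
    have hs_eq2 : (r ^ 2) ^ 2 = s := by rw [← pow_mul]; exact hs_eq
    have hsqrt_s : Real.sqrt s = r ^ 2 := by
      rw [← hs_eq2]; exact Real.sqrt_sq (by positivity)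
    have ht_ub : t ≤ 4 * r := by
      have e5 : t = 4 * Real.log r := by
        rw [htdef, ← hs_eq, Real.log_pow]; push_cast; ring
      have := Real.log_le_sub_one_of_pos hr0
      linarith
    have hsL : Real.sqrt L ≤ Real.sqrt 2 * r ^ 2 := by
      calc Real.sqrt L ≤ Real.sqrt (2 * s) := Real.sqrt_le_sqrt hLub
        _ = Real.sqrt 2 * Real.sqrt s := Real.sqrt_mul (by norm_num) s
        _ = Real.sqrt 2 * r ^ 2 := by rw [hsqrt_s]
    have h4' : 16 * (I * Real.sqrt 2) ≤ ε ^ 2 * r * Real.log 2 ^ (1 + δ) := by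
      have hh := (div_le_iff₀ (by positivity : (0:ℝ) < ε ^ 2)).1 h4
      have ecancel : I * Real.sqrt 2 / Real.log 2 ^ (1 + δ) * Real.log 2 ^ (1 + δ)
          = I * Real.sqrt 2 := div_mul_cancel₀ _ (ne_of_gt hQ)
      nlinarith [mul_le_mul_of_nonneg_right hh hQ.le]
    have i1 : Real.sqrt L / Real.log 2 ^ (1 + δ) * I
        ≤ Real.sqrt 2 * r ^ 2 * I / Real.log 2 ^ (1 + δ) := by
      rw [div_mul_eq_mul_div]
      gcongr
    have i2 : Real.sqrt 2 * r ^ 2 * I / Real.log 2 ^ (1 + δ) ≤ ε ^ 2 * s / (4 * t) := by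
      rw [div_le_div_iff₀ hQ (by positivity), ← hs_eq]
      nlinarith [mul_le_mul_of_nonneg_right h4' (pow_nonneg hr0.le 3),
        mul_le_mul_of_nonneg_left ht_ub
          (by positivity : (0:ℝ) ≤ Real.sqrt 2 * r ^ 2 * I),
        mul_pos hr0 hr0, Real.sqrt_nonneg 2, hI, ht0.le]
    linarith
  have hsum : (P * L / Real.log (2 + L) ^ (1 + δ)
      + Real.sqrt L / Real.log 2 ^ (1 + δ)) * I ≤ ε ^ 2 * s / (2 * t) := by
    rw [add_mul]
    have e : ε ^ 2 * s / (4 * t) + ε ^ 2 * s / (4 * t) = ε ^ 2 * s / (2 * t) := by ring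
    linarith
  linarith

private lemma assemble {F c : ℕ → ℝ} (h0 : ∀ n, 0 ≤ F n) (hc : Summable c)
    (h : ∀ᶠ n in atTop, F n ≤ c n) : Summable F := by
  obtain ⟨N, hN⟩ := eventually_atTop.1 h
  exact (summable_nat_add_iff N).1 (Summable.of_nonneg_of_le (fun n => h0 _)
    (fun n => hN (n + N) (Nat.le_add_left N n)) ((summable_nat_add_iff N).2 hc))

theorem stmt10 {Ω : Type*} [MeasureSpace Ω] [IsProbabilityMeasure (ℙ : Measure Ω)]
    (X : Ω → ℝ) (hX : Measurable X)
    (δ : ℝ) (hδ : 0 < δ)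
    (hmom : Integrable (fun ω =>
      (X ω) ^ 2 * Real.log (2 + Real.log (2 + |X ω|)) ^ (1 + δ) / Real.log (2 + |X ω|)) ℙ) :
    ∀ ε : ℝ, 0 < ε →
      Summable (fun n : ℕ =>
        if (∫ ω in {ω | |X ω| < ε * Real.sqrt ((n + 2 : ℝ) * Real.log (n + 2))}, (X ω) ^ 2 ∂ℙ)
            = 0 then 0
        else (n + 2 : ℝ) ^
          (-1 - ε ^ 2 /
            ∫ ω in {ω | |X ω| < ε * Real.sqrt ((n + 2 : ℝ) * Real.log (n + 2))}, (X ω) ^ 2 ∂ℙ)) := by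
  intro ε hε
  have hl2 : (0:ℝ) < Real.log 2 := Real.log_pos (by norm_num)
  set g : Ω → ℝ := fun ω =>
    (X ω) ^ 2 * Real.log (2 + Real.log (2 + |X ω|)) ^ (1 + δ) / Real.log (2 + |X ω|) with hgdef
  have hg0 : ∀ ω, 0 ≤ g ω := by
    intro ω
    have hl : (0:ℝ) < Real.log (2 + |X ω|) := Real.log_pos (by
      have := abs_nonneg (X ω); linarith)
    have hll : (0:ℝ) < Real.log (2 + Real.log (2 + |X ω|)) := Real.log_pos (by linarith)
    rw [hgdef]
    exact div_nonneg (mul_nonneg (sq_nonneg _) (Real.rpow_nonneg hll.le _)) hl.le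
  set I := ∫ ω, g ω ∂ℙ with hIdef
  have hI0 : 0 ≤ I := integral_nonneg hg0
  have hSmeas : ∀ n : ℕ, MeasurableSet {ω | |X ω| < ε * Real.sqrt (((n:ℝ) + 2) * Real.log ((n:ℝ) + 2))} :=
    fun n => measurableSet_lt hX.abs measurable_const
  have key : ∀ n : ℕ, (∫ ω in {ω | |X ω| < ε * Real.sqrt (((n:ℝ) + 2) * Real.log ((n:ℝ) + 2))}, (X ω) ^ 2 ∂ℙ) ≤ (2 ^ (1 + δ) * Real.log (2 + ε * Real.sqrt (((n:ℝ) + 2) * Real.log ((n:ℝ) + 2))) / Real.log (2 + Real.log (2 + ε * Real.sqrt (((n:ℝ) + 2) * Real.log ((n:ℝ) + 2)))) ^ (1 + δ) + Real.sqrt (Real.log (2 + ε * Real.sqrt (((n:ℝ) + 2) * Real.log ((n:ℝ) + 2)))) / Real.log 2 ^ (1 + δ)) * I := by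
    intro n
    set m := ε * Real.sqrt (((n:ℝ) + 2) * Real.log ((n:ℝ) + 2)) with hmdef
    have hm0 : 0 ≤ m := mul_nonneg hε.le (Real.sqrt_nonneg _)
    have hlM : (0:ℝ) < Real.log (2 + m) := Real.log_pos (by linarith)
    have hllM : (0:ℝ) < Real.log (2 + Real.log (2 + m)) := Real.log_pos (by linarith)
    have hBn : 0 ≤ 2 ^ (1 + δ) * Real.log (2 + m) / Real.log (2 + Real.log (2 + m)) ^ (1 + δ)
        + Real.sqrt (Real.log (2 + m)) / Real.log 2 ^ (1 + δ) := by positivity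
    have hpt : ∀ ω ∈ {ω | |X ω| < m},
        (X ω) ^ 2 ≤ (2 ^ (1 + δ) * Real.log (2 + m) / Real.log (2 + Real.log (2 + m)) ^ (1 + δ)
          + Real.sqrt (Real.log (2 + m)) / Real.log 2 ^ (1 + δ)) * g ω := by
      intro ω hω
      have hωlt : |X ω| < m := hω
      have hl : (0:ℝ) < Real.log (2 + |X ω|) := Real.log_pos (by
        have := abs_nonneg (X ω); linarith)
      have hll : (0:ℝ) < Real.log (2 + Real.log (2 + |X ω|)) := Real.log_pos (by linarith)
      have hid : (X ω) ^ 2 = g ω *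
          (Real.log (2 + |X ω|) / Real.log (2 + Real.log (2 + |X ω|)) ^ (1 + δ)) := by
        simp only [hgdef]
        have h1 : Real.log (2 + |X ω|) ≠ 0 := ne_of_gt hl
        have h2' : Real.log (2 + Real.log (2 + |X ω|)) ^ (1 + δ) ≠ 0 :=
          ne_of_gt (Real.rpow_pos_of_pos hll _)
        field_simp
      rw [hid]
      calc g ω * (Real.log (2 + |X ω|) / Real.log (2 + Real.log (2 + |X ω|)) ^ (1 + δ))
          ≤ g ω * (2 ^ (1 + δ) * Real.log (2 + m) / Real.log (2 + Real.log (2 + m)) ^ (1 + δ)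
            + Real.sqrt (Real.log (2 + m)) / Real.log 2 ^ (1 + δ)) :=
            mul_le_mul_of_nonneg_left (lemA hδ (abs_nonneg _) hωlt.le) (hg0 ω)
        _ = _ := mul_comm _ _
    have hgS : IntegrableOn g {ω | |X ω| < m} ℙ := hmom.integrableOn
    have hBg : IntegrableOn (fun ω =>
        (2 ^ (1 + δ) * Real.log (2 + m) / Real.log (2 + Real.log (2 + m)) ^ (1 + δ)
          + Real.sqrt (Real.log (2 + m)) / Real.log 2 ^ (1 + δ)) * g ω)
        {ω | |X ω| < m} ℙ := hgS.const_mul _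
    have hX2 : IntegrableOn (fun ω => (X ω) ^ 2) {ω | |X ω| < m} ℙ := by
      apply Integrable.mono hBg ((hX.pow_const 2).aestronglyMeasurable)
      rw [ae_restrict_iff' (hSmeas n)]
      filter_upwards with ω hω
      rw [Real.norm_eq_abs, Real.norm_eq_abs, abs_of_nonneg (sq_nonneg _),
        abs_of_nonneg (mul_nonneg hBn (hg0 ω))]
      exact hpt ω hω
    calc (∫ ω in {ω | |X ω| < m}, (X ω) ^ 2 ∂ℙ)
        ≤ ∫ ω in {ω | |X ω| < m},
            (2 ^ (1 + δ) * Real.log (2 + m) / Real.log (2 + Real.log (2 + m)) ^ (1 + δ)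
              + Real.sqrt (Real.log (2 + m)) / Real.log 2 ^ (1 + δ)) * g ω ∂ℙ :=
          setIntegral_mono_on hX2 hBg (hSmeas n) hpt
      _ = (2 ^ (1 + δ) * Real.log (2 + m) / Real.log (2 + Real.log (2 + m)) ^ (1 + δ)
            + Real.sqrt (Real.log (2 + m)) / Real.log 2 ^ (1 + δ))
          * ∫ ω in {ω | |X ω| < m}, g ω ∂ℙ := integral_const_mul _ _
      _ ≤ _ := by
          rw [hIdef]
          exact mul_le_mul_of_nonneg_left
            (setIntegral_le_integral hmom (Filter.Eventually.of_forall hg0)) hBn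
  -- tendsto facts
  have hn2 : Filter.Tendsto (fun n : ℕ => ((n:ℝ) + 2)) atTop atTop :=
    tendsto_atTop_add_const_right _ _ tendsto_natCast_atTop_atTop
  have hs : Filter.Tendsto (fun n : ℕ => Real.log ((n:ℝ) + 2)) atTop atTop :=
    Real.tendsto_log_atTop.comp hn2
  have ht : Filter.Tendsto (fun n : ℕ => Real.log (Real.log ((n:ℝ) + 2))) atTop atTop :=
    Real.tendsto_log_atTop.comp hs
  have htd : Filter.Tendsto (fun n : ℕ => Real.log (Real.log ((n:ℝ) + 2)) ^ δ) atTop atTop :=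
    (tendsto_rpow_atTop hδ).comp ht
  have hs4 : Filter.Tendsto (fun n : ℕ => Real.log ((n:ℝ) + 2) ^ ((1:ℝ)/4)) atTop atTop :=
    (tendsto_rpow_atTop (by norm_num : (0:ℝ) < 1/4)).comp hs
  apply assemble (c := fun n : ℕ => 1 / (((n:ℝ) + 2) * Real.log ((n:ℝ) + 2) ^ 2))
  · intro n
    split_ifs
    · exact le_refl 0
    · exact Real.rpow_nonneg (by positivity) _
  · exact sumc
  · filter_upwards [hs.eventually_ge_atTop (max 1 (ε⁻¹ ^ 2)),
      ht.eventually_ge_atTop (2 * Real.log 2),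
      htd.eventually_ge_atTop (4 * (I * 2 ^ (3 + 2 * δ)) / ε ^ 2),
      hs4.eventually_ge_atTop (16 * (I * Real.sqrt 2 / Real.log 2 ^ (1 + δ)) / ε ^ 2),
      hn2.eventually_ge_atTop (4 * ε ^ 4)] with n h1 h2 h3 h4 h5
    have hk := key n
    set T' := ∫ ω in {ω | |X ω| < ε * Real.sqrt (((n:ℝ) + 2) * Real.log ((n:ℝ) + 2))}, (X ω) ^ 2 ∂ℙ with hTdef
    set s := Real.log ((n:ℝ) + 2) with hsdef
    have hn2' : (0:ℝ) < (n:ℝ) + 2 := by positivity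
    have hone : (1:ℝ) ≤ (n:ℝ) + 2 := by
      have := (Nat.cast_nonneg n : (0:ℝ) ≤ (n:ℝ)); linarith
    have hs1 : 1 ≤ s := le_trans (le_max_left _ _) h1
    have hs0 : 0 < s := by linarith
    have ht0 : 0 < Real.log s := lt_of_lt_of_le (by positivity) h2
    have hsq2 : 0 < Real.sqrt ((n:ℝ) + 2) := Real.sqrt_pos.2 hn2'
    have elogsq : Real.log (Real.sqrt ((n:ℝ) + 2)) = s / 2 := by
      rw [Real.log_sqrt hn2'.le, ← hsdef]
    have hs2 : s ≤ 2 * Real.sqrt ((n:ℝ) + 2) := by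
      have := Real.log_le_sub_one_of_pos hsq2
      linarith [elogsq]
    have heps : 2 * ε ^ 2 ≤ Real.sqrt ((n:ℝ) + 2) := by
      have h25 : (2 * ε ^ 2) ^ 2 ≤ (n:ℝ) + 2 := by nlinarith
      calc 2 * ε ^ 2 = Real.sqrt ((2 * ε ^ 2) ^ 2) := (Real.sqrt_sq (by positivity)).symm
        _ ≤ _ := Real.sqrt_le_sqrt h25
    have hi1 : ε ^ 2 * s ≤ (n:ℝ) + 2 := by
      nlinarith [Real.sq_sqrt hn2'.le, hsq2.le, sq_nonneg ε]
    have hm_ub : ε * Real.sqrt (((n:ℝ) + 2) * s) ≤ (n:ℝ) + 2 := by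
      have e : ε * Real.sqrt (((n:ℝ) + 2) * s) = Real.sqrt (ε ^ 2 * (((n:ℝ) + 2) * s)) := by
        rw [Real.sqrt_mul (sq_nonneg ε), Real.sqrt_sq hε.le]
      rw [e]
      calc Real.sqrt (ε ^ 2 * (((n:ℝ) + 2) * s)) ≤ Real.sqrt (((n:ℝ) + 2) ^ 2) :=
            Real.sqrt_le_sqrt (by nlinarith [mul_le_mul_of_nonneg_left hi1 hn2'.le])
        _ = (n:ℝ) + 2 := Real.sqrt_sq hn2'.le
    have hm_lb : Real.sqrt ((n:ℝ) + 2) ≤ ε * Real.sqrt (((n:ℝ) + 2) * s) := by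
      have h6 : ε⁻¹ ^ 2 ≤ s := le_trans (le_max_right _ _) h1
      have h7 : ε⁻¹ ≤ Real.sqrt s := by
        calc ε⁻¹ = Real.sqrt (ε⁻¹ ^ 2) := (Real.sqrt_sq (by positivity)).symm
          _ ≤ Real.sqrt s := Real.sqrt_le_sqrt h6
      have e : Real.sqrt (((n:ℝ) + 2) * s) = Real.sqrt ((n:ℝ) + 2) * Real.sqrt s :=
        Real.sqrt_mul hn2'.le s
      rw [e]
      have h8 : 1 ≤ ε * Real.sqrt s := by
        calc (1:ℝ) = ε * ε⁻¹ := (mul_inv_cancel₀ (ne_of_gt hε)).symm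
          _ ≤ ε * Real.sqrt s := mul_le_mul_of_nonneg_left h7 hε.le
      nlinarith [hsq2.le]
    have hub : Real.log (2 + ε * Real.sqrt (((n:ℝ) + 2) * s)) ≤ 2 * s := by
      calc Real.log (2 + ε * Real.sqrt (((n:ℝ) + 2) * s)) ≤ Real.log (((n:ℝ) + 2) ^ 2) := by
            apply Real.log_le_log (by positivity)
            nlinarith [(Nat.cast_nonneg n : (0:ℝ) ≤ (n:ℝ))]
        _ = 2 * s := by rw [Real.log_pow, ← hsdef]; push_cast; ring
    have hlb : s / 2 ≤ Real.log (2 + ε * Real.sqrt (((n:ℝ) + 2) * s)) := by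
      calc s / 2 = Real.log (Real.sqrt ((n:ℝ) + 2)) := elogsq.symm
        _ ≤ _ := Real.log_le_log hsq2 (by linarith)
    split_ifs with hT0'
    · positivity
    · have hTpos : 0 < T' :=
        lt_of_le_of_ne (setIntegral_nonneg (hSmeas n) fun ω _ => sq_nonneg _) (Ne.symm hT0')
      have hTb : T' ≤ ε ^ 2 * s / (2 * Real.log s) :=
        core hδ hε hI0 hs1 h2 h3 h4 hub hlb hk
      have hexp : -1 - ε ^ 2 / T' ≤ -1 - 2 * Real.log s / s := by
        have hd : 2 * Real.log s / s ≤ ε ^ 2 / T' := by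
          rw [div_le_div_iff₀ hs0 hTpos]
          have := (le_div_iff₀ (by positivity : (0:ℝ) < 2 * Real.log s)).1 hTb
          nlinarith
        linarith
      calc ((n:ℝ) + 2) ^ (-1 - ε ^ 2 / T') ≤ ((n:ℝ) + 2) ^ (-1 - 2 * Real.log s / s) :=
            Real.rpow_le_rpow_of_exponent_le hone hexp
        _ = 1 / (((n:ℝ) + 2) * s ^ 2) := by
            rw [Real.rpow_def_of_pos hn2', ← hsdef,
              show s * (-1 - 2 * Real.log s / s) = -s + -(Real.log s + Real.log s) from by
                field_simp; ring,
              Real.exp_add, Real.exp_neg, Real.exp_neg, Real.exp_add, Real.exp_log hs0,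
              hsdef, Real.exp_log hn2']
            rw [pow_two]
            field_simp
        _ ≤ 1 / (((n:ℝ) + 2) * s ^ 2) := le_refl _
end

section
/- Let X₁, …, X_n be independent symmetric real random variables and S_n = X₁ + ⋯ + X_n. Then for each positive integer r there exist finite constants C_r and D_r (depending only on r) such that for all λ ≥ 0: P(|S_n| ≥ λ) ≤ C_r·∑_{k=1}^n P(|X_k| ≥ λ/(2r)) + D_r·[P(|S_n| ≥ λ/(2r))]^r. -/
open MeasureTheory ProbabilityTheory Finset
open scoped ProbabilityTheory ENNReal

set_option linter.unusedSectionVars false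
namespace HJaux

variable {Ω : Type} [MeasureSpace Ω]

lemma abs_le_abs_add {a b : ℝ} (h : 0 ≤ a * b) : |a| ≤ |a + b| := by
  rw [← Real.sqrt_sq_eq_abs, ← Real.sqrt_sq_eq_abs]
  exact Real.sqrt_le_sqrt (by nlinarith [sq_nonneg b])

/-- partial sum `X_0 + ... + X_{i-1}` -/
def pS {n : ℕ} (X : Fin n → Ω → ℝ) (i : ℕ) (ω : Ω) : ℝ :=
  ∑ k : Fin n, if (k : ℕ) < i then X k ω else 0

/-- tail sum `X_j + ... + X_{n-1}` -/
def pT {n : ℕ} (X : Fin n → Ω → ℝ) (j : ℕ) (ω : Ω) : ℝ :=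
  ∑ k : Fin n, if j ≤ (k : ℕ) then X k ω else 0

def headF (n j : ℕ) : Finset (Fin n) := Finset.univ.filter (fun k => (k : ℕ) < j)
def tailF (n j : ℕ) : Finset (Fin n) := Finset.univ.filter (fun k => j ≤ (k : ℕ))

def Hd {n : ℕ} (X : Fin n → Ω → ℝ) (j : ℕ) : Ω → ({x // x ∈ headF n j} → ℝ) :=
  fun ω k => X k ω

def sg (n j i : ℕ) (v : {x // x ∈ headF n j} → ℝ) : ℝ :=
  ∑ k : {x // x ∈ headF n j}, if ((k : Fin n) : ℕ) < i then v k else 0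

variable {n : ℕ} {X : Fin n → Ω → ℝ}

lemma mS (mX : ∀ k, Measurable (X k)) (i : ℕ) : Measurable (pS X i) := by
  apply Finset.measurable_sum
  intro k _
  by_cases h : (k : ℕ) < i <;> simp only [h, if_true, if_false]
  · exact mX k
  · exact measurable_const

lemma mT (mX : ∀ k, Measurable (X k)) (j : ℕ) : Measurable (pT X j) := by
  apply Finset.measurable_sum
  intro k _
  by_cases h : j ≤ (k : ℕ) <;> simp only [h, if_true, if_false]
  · exact mX k
  · exact measurable_const

lemma mHd (mX : ∀ k, Measurable (X k)) (j : ℕ) : Measurable (Hd X j) :=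
  measurable_pi_lambda _ (fun k => mX k)

lemma msg (n j i : ℕ) : Measurable (sg n j i) := by
  apply Finset.measurable_sum
  intro k _
  by_cases h : ((k : Fin n) : ℕ) < i <;> simp only [h, if_true, if_false]
  · exact measurable_pi_apply k
  · exact measurable_const

lemma pS_zero (ω : Ω) : pS X 0 ω = 0 := by simp [pS]

lemma pS_top (ω : Ω) : pS X n ω = ∑ k, X k ω := by
  apply Finset.sum_congr rfl
  intro k _
  simp [k.isLt]

lemma pS_add_pT (j : ℕ) (ω : Ω) : pS X j ω + pT X j ω = pS X n ω := by
  rw [pS_top, pS, pT, ← Finset.sum_add_distrib]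
  apply Finset.sum_congr rfl
  intro k _
  rcases lt_or_ge (k : ℕ) j with h | h
  · simp [h, Nat.not_le.mpr h]
  · simp [h, Nat.not_lt.mpr h]

lemma pS_succ {i : ℕ} (hi : i < n) (ω : Ω) :
    pS X (i + 1) ω = pS X i ω + X ⟨i, hi⟩ ω := by
  have h1 : ∀ k : Fin n, (if (k : ℕ) < i + 1 then X k ω else 0) =
      (if (k : ℕ) < i then X k ω else 0) + (if k = ⟨i, hi⟩ then X k ω else 0) := by
    intro k
    by_cases hk : (k : ℕ) < i
    · have : k ≠ ⟨i, hi⟩ := by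
        intro h; rw [h] at hk; simp at hk
      simp [hk, this, Nat.lt_succ_of_lt hk]
    · by_cases hk2 : (k : ℕ) = i
      · have : k = ⟨i, hi⟩ := Fin.ext hk2
        simp [this, hk]
      · have : ¬ (k : ℕ) < i + 1 := by omega
        have h3 : k ≠ ⟨i, hi⟩ := by
          intro h; rw [h] at hk2; simp at hk2
        simp [this, hk, h3]
  rw [pS, Finset.sum_congr rfl (fun k _ => h1 k), Finset.sum_add_distrib]
  congr 1
  simp

lemma sg_Hd {i j : ℕ} (hij : i ≤ j) (ω : Ω) : sg n j i (Hd X j ω) = pS X i ω := by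
  have h1 : sg n j i (Hd X j ω)
      = ∑ k ∈ headF n j, if (k : ℕ) < i then X k ω else 0 :=
    Finset.sum_coe_sort (headF n j) (fun k => if (k : ℕ) < i then X k ω else 0)
  rw [h1, pS]
  apply Finset.sum_subset (Finset.subset_univ _)
  intro k _ hk
  have : ¬ (k : ℕ) < j := by simpa [headF] using hk
  have : ¬ (k : ℕ) < i := by omega
  simp [this]

lemma pT_eq (j : ℕ) (ω : Ω) : pT X j ω = ∑ k ∈ tailF n j, X k ω := by
  rw [pT, tailF, Finset.sum_filter]


variable [IsProbabilityMeasure (ℙ : Measure Ω)]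

lemma pairFlip {α : Type} [MeasurableSpace α]
    {H : Ω → α} {T T' : Ω → ℝ} (mH : Measurable H) (mT : Measurable T) (mT' : Measurable T')
    (h1 : IndepFun H T ℙ) (h2 : IndepFun H T' ℙ) (h3 : IdentDistrib T T' ℙ ℙ) :
    IdentDistrib (fun ω => (H ω, T ω)) (fun ω => (H ω, T' ω)) ℙ ℙ :=
  ⟨(mH.prodMk mT).aemeasurable, (mH.prodMk mT').aemeasurable, by
    rw [(indepFun_iff_map_prod_eq_prod_map_map mH.aemeasurable mT.aemeasurable).mp h1,
      (indepFun_iff_map_prod_eq_prod_map_map mH.aemeasurable mT'.aemeasurable).mp h2,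
      h3.map_eq]⟩

lemma symSum (mX : ∀ k, Measurable (X k))
    (hInd : iIndepFun X ℙ)
    (hSym : ∀ k, IdentDistrib (X k) (fun ω => -X k ω) ℙ ℙ)
    (F : Finset (Fin n)) :
    IdentDistrib (fun ω => ∑ k ∈ F, X k ω) (fun ω => -∑ k ∈ F, X k ω) ℙ ℙ := by
  classical
  induction F using Finset.induction with
  | empty => simpa using IdentDistrib.refl (aemeasurable_const (b := (0:ℝ)))
  | @insert a F ha ih =>
    have mY : Measurable (X a) := mX a
    have mZ : Measurable (fun ω => ∑ k ∈ F, X k ω) :=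
      Finset.measurable_sum _ (fun k _ => mX k)
    have hZY : IndepFun (fun ω => ∑ k ∈ F, X k ω) (X a) ℙ := by
      have h := hInd.indepFun_finsetSum_of_notMem mX ha
      exact h.congr (Filter.Eventually.of_forall fun ω => by simp) (Filter.Eventually.of_forall fun ω => rfl)
    -- step 1 : Y + Z ~ Y - Z   (flip Z, head = Y)
    have hYZ : IndepFun (X a) (fun ω => ∑ k ∈ F, X k ω) ℙ := hZY.symm
    have hYZ' : IndepFun (X a) (fun ω => -∑ k ∈ F, X k ω) ℙ :=
      hYZ.comp measurable_id measurable_neg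
    have p1 : IdentDistrib (fun ω => (X a ω, ∑ k ∈ F, X k ω))
        (fun ω => (X a ω, -∑ k ∈ F, X k ω)) ℙ ℙ :=
      pairFlip mY mZ mZ.neg hYZ hYZ' ih
    have s1 : IdentDistrib (fun ω => X a ω + ∑ k ∈ F, X k ω)
        (fun ω => X a ω + -∑ k ∈ F, X k ω) ℙ ℙ :=
      p1.comp (measurable_fst.add measurable_snd)
    -- step 2 : Y - Z ~ -Y - Z  (flip Y, head = -Z)
    have hZY' : IndepFun (fun ω => -∑ k ∈ F, X k ω) (X a) ℙ := hYZ'.symm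
    have hZY'' : IndepFun (fun ω => -∑ k ∈ F, X k ω) (fun ω => -X a ω) ℙ :=
      hZY'.comp measurable_id measurable_neg
    have p2 : IdentDistrib (fun ω => (-∑ k ∈ F, X k ω, X a ω))
        (fun ω => (-∑ k ∈ F, X k ω, -X a ω)) ℙ ℙ :=
      pairFlip mZ.neg mY mY.neg hZY' hZY'' (hSym a)
    have s2 : IdentDistrib (fun ω => X a ω + -∑ k ∈ F, X k ω)
        (fun ω => -X a ω + -∑ k ∈ F, X k ω) ℙ ℙ :=
      p2.comp (measurable_snd.add measurable_fst)
    have final := s1.trans s2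
    have e1 : (fun ω => ∑ k ∈ insert a F, X k ω)
        = fun ω => X a ω + ∑ k ∈ F, X k ω := by
      ext ω; rw [Finset.sum_insert ha]
    have e2 : (fun ω => -∑ k ∈ insert a F, X k ω)
        = fun ω => -X a ω + -∑ k ∈ F, X k ω := by
      ext ω; rw [Finset.sum_insert ha]; ring
    rw [e1, e2]
    exact final

lemma indepHT (mX : ∀ k, Measurable (X k))
    (hInd : iIndepFun X ℙ) (j : ℕ) :
    IndepFun (Hd X j) (pT X j) ℙ := by
  classical
  have disj : Disjoint (headF n j) (tailF n j) := by
    simp only [Finset.disjoint_left, headF, tailF, Finset.mem_filter, Finset.mem_univ, true_and]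
    omega
  have base := hInd.indepFun_finset (headF n j) (tailF n j) disj mX
  have tg : Measurable (fun v : {x // x ∈ tailF n j} → ℝ => ∑ k, v k) :=
    Finset.measurable_sum _ (fun k _ => measurable_pi_apply k)
  have h := base.comp measurable_id tg
  refine h.congr (Filter.Eventually.of_forall fun ω => rfl)
    (Filter.Eventually.of_forall fun ω => ?_)
  show (∑ k : {x // x ∈ tailF n j}, X (k : Fin n) ω) = pT X j ω
  rw [pT_eq]
  exact Finset.sum_coe_sort (tailF n j) (fun k => X k ω)

lemma flipPairHT (mX : ∀ k, Measurable (X k))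
    (hInd : iIndepFun X ℙ)
    (hSym : ∀ k, IdentDistrib (X k) (fun ω => -X k ω) ℙ ℙ) (j : ℕ) :
    IdentDistrib (fun ω => (Hd X j ω, pT X j ω)) (fun ω => (Hd X j ω, -pT X j ω)) ℙ ℙ := by
  have e : (fun ω : Ω => ∑ k ∈ tailF n j, X k ω) = pT X j := by
    ext ω; rw [pT_eq]
  have idT : IdentDistrib (pT X j) (fun ω => -pT X j ω) ℙ ℙ := by
    have h := symSum mX hInd hSym (tailF n j)
    rw [e] at h
    have e2 : (fun ω : Ω => -∑ k ∈ tailF n j, X k ω) = (fun ω => -pT X j ω) := by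
      ext ω; rw [pT_eq]
    rwa [e2] at h
  exact pairFlip (mHd mX j) (mT mX j) (mT mX j).neg (indepHT mX hInd j)
    ((indepHT mX hInd j).comp measurable_id measurable_neg) idT

def Aev {n : ℕ} (X : Fin n → Ω → ℝ) (u : ℝ) (j : ℕ) : Set Ω :=
  {ω | (∀ i < j, |pS X i ω| < u) ∧ u ≤ |pS X j ω|}

def Gset (n : ℕ) (u : ℝ) (j : ℕ) : Set ({x // x ∈ headF n j} → ℝ) :=
  {v | (∀ i < j, |sg n j i v| < u) ∧ u ≤ |sg n j j v|}

lemma mGset {u : ℝ} {j : ℕ} : MeasurableSet (Gset n u j) := by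
  have h : Gset n u j = (⋂ i ∈ Set.Iio j, {v | |sg n j i v| < u}) ∩ {v | u ≤ |sg n j j v|} := by
    ext v; simp [Gset]
  rw [h]
  exact (MeasurableSet.biInter (Set.to_countable _)
    fun i _ => measurableSet_lt (msg n j i).abs measurable_const).inter
    (measurableSet_le measurable_const (msg n j j).abs)

lemma Aev_pre {u : ℝ} {j : ℕ} : Aev X u j = Hd X j ⁻¹' Gset n u j := by
  ext ω
  simp only [Aev, Gset, Set.mem_setOf_eq, Set.mem_preimage]
  constructor
  · rintro ⟨h1, h2⟩
    exact ⟨fun i hi => by rw [sg_Hd (le_of_lt hi)]; exact h1 i hi,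
      by rw [sg_Hd le_rfl]; exact h2⟩
  · rintro ⟨h1, h2⟩
    refine ⟨fun i hi => ?_, by rwa [sg_Hd le_rfl] at h2⟩
    have := h1 i hi; rwa [sg_Hd (le_of_lt hi)] at this

lemma mAev (mX : ∀ k, Measurable (X k)) {u : ℝ} {j : ℕ} : MeasurableSet (Aev X u j) := by
  rw [Aev_pre]; exact mGset.preimage (mHd mX j)

lemma levy_step (mX : ∀ k, Measurable (X k))
    (hInd : iIndepFun X ℙ)
    (hSym : ∀ k, IdentDistrib (X k) (fun ω => -X k ω) ℙ ℙ) (u : ℝ) (j : ℕ) :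
    ℙ (Aev X u j) ≤ 2 * ℙ (Aev X u j ∩ {ω | 0 ≤ pS X j ω * pT X j ω}) := by
  classical
  set C : Set (({x // x ∈ headF n j} → ℝ) × ℝ) :=
    {p | p.1 ∈ Gset n u j ∧ 0 ≤ sg n j j p.1 * p.2} with hC
  have mC : MeasurableSet C := by
    have : C = (Prod.fst ⁻¹' Gset n u j) ∩ {p | 0 ≤ sg n j j p.1 * p.2} := rfl
    rw [this]
    exact (mGset.preimage measurable_fst).inter
      (measurableSet_le measurable_const (((msg n j j).comp measurable_fst).mul measurable_snd))
  have pre1 : (fun ω => (Hd X j ω, pT X j ω)) ⁻¹' C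
      = Aev X u j ∩ {ω | 0 ≤ pS X j ω * pT X j ω} := by
    ext ω
    simp only [Set.mem_preimage, hC, Set.mem_setOf_eq, Set.mem_inter_iff, Aev_pre]
    rw [sg_Hd le_rfl]
  have pre2 : (fun ω => (Hd X j ω, -pT X j ω)) ⁻¹' C
      = Aev X u j ∩ {ω | pS X j ω * pT X j ω ≤ 0} := by
    ext ω
    simp only [Set.mem_preimage, hC, Set.mem_setOf_eq, Set.mem_inter_iff, Aev_pre]
    rw [sg_Hd le_rfl, mul_neg, neg_nonneg]
  have flip := (flipPairHT mX hInd hSym j).measure_mem_eq mC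
  rw [pre1, pre2] at flip
  have cover : Aev X u j ⊆ (Aev X u j ∩ {ω | 0 ≤ pS X j ω * pT X j ω})
      ∪ (Aev X u j ∩ {ω | pS X j ω * pT X j ω ≤ 0}) := by
    intro ω hω
    rcases le_total 0 (pS X j ω * pT X j ω) with h | h
    · exact Or.inl ⟨hω, h⟩
    · exact Or.inr ⟨hω, h⟩
  calc ℙ (Aev X u j) ≤ ℙ ((Aev X u j ∩ {ω | 0 ≤ pS X j ω * pT X j ω})
        ∪ (Aev X u j ∩ {ω | pS X j ω * pT X j ω ≤ 0})) := measure_mono cover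
    _ ≤ ℙ (Aev X u j ∩ {ω | 0 ≤ pS X j ω * pT X j ω})
        + ℙ (Aev X u j ∩ {ω | pS X j ω * pT X j ω ≤ 0}) := measure_union_le _ _
    _ = 2 * ℙ (Aev X u j ∩ {ω | 0 ≤ pS X j ω * pT X j ω}) := by rw [← flip, two_mul]

lemma Aev_disjoint {u : ℝ} :
    (↑(Finset.Icc 1 n) : Set ℕ).PairwiseDisjoint (fun j => Aev X u j) := by
  have key : ∀ j j' : ℕ, j < j' → ∀ ω, ω ∈ Aev X u j → ω ∉ Aev X u j' := by
    intro j j' hjj' ω hω hω'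
    exact absurd hω.2 (not_le.mpr (hω'.1 j hjj'))
  intro j _ j' _ hne
  rcases lt_or_gt_of_ne hne with h | h
  · exact Set.disjoint_left.mpr (fun ω hω hω' => key j j' h ω hω hω')
  · exact Set.disjoint_left.mpr (fun ω hω hω' => key j' j h ω hω' hω)

lemma levy (mX : ∀ k, Measurable (X k))
    (hInd : iIndepFun X ℙ)
    (hSym : ∀ k, IdentDistrib (X k) (fun ω => -X k ω) ℙ ℙ) (u : ℝ) :
    ∑ j ∈ Finset.Icc 1 n, ℙ (Aev X u j) ≤ 2 * ℙ {ω | u ≤ |pS X n ω|} := by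
  classical
  set B : ℕ → Set Ω := fun j => Aev X u j ∩ {ω | 0 ≤ pS X j ω * pT X j ω} with hB
  have mB : ∀ j, MeasurableSet (B j) := fun j =>
    (mAev mX).inter (measurableSet_le measurable_const ((mS mX j).mul (mT mX j)))
  have hBsub : ∀ j, B j ⊆ {ω | u ≤ |pS X n ω|} := by
    intro j ω hω
    have h1 : u ≤ |pS X j ω| := hω.1.2
    have h2 : |pS X j ω| ≤ |pS X j ω + pT X j ω| := abs_le_abs_add hω.2
    have h3 : pS X j ω + pT X j ω = pS X n ω := pS_add_pT j ω
    show u ≤ |pS X n ω|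
    rw [← h3]; exact h1.trans h2
  have hdisj : (↑(Finset.Icc 1 n) : Set ℕ).PairwiseDisjoint B :=
    Aev_disjoint.mono (fun j => Set.inter_subset_left)
  calc ∑ j ∈ Finset.Icc 1 n, ℙ (Aev X u j)
      ≤ ∑ j ∈ Finset.Icc 1 n, 2 * ℙ (B j) :=
        Finset.sum_le_sum (fun j _ => levy_step mX hInd hSym u j)
    _ = 2 * ∑ j ∈ Finset.Icc 1 n, ℙ (B j) := by rw [Finset.mul_sum]
    _ = 2 * ℙ (⋃ j ∈ Finset.Icc 1 n, B j) := by
        rw [measure_biUnion_finset hdisj (fun j _ => mB j)]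
    _ ≤ 2 * ℙ {ω | u ≤ |pS X n ω|} := by
        gcongr
        exact Set.iUnion₂_subset (fun j _ => hBsub j)

lemma tail_bound (mX : ∀ k, Measurable (X k))
    (hInd : iIndepFun X ℙ)
    (hSym : ∀ k, IdentDistrib (X k) (fun ω => -X k ω) ℙ ℙ) (j : ℕ) (t : ℝ) :
    ℙ {ω | t ≤ |pT X j ω|} ≤ 2 * ℙ {ω | t ≤ |pS X n ω|} := by
  have mφ : Measurable (fun p : ({x // x ∈ headF n j} → ℝ) × ℝ => sg n j j p.1 + p.2) :=
    ((msg n j j).comp measurable_fst).add measurable_snd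
  have idc := (flipPairHT mX hInd hSym j).comp mφ
  have e1 : ((fun p : ({x // x ∈ headF n j} → ℝ) × ℝ => sg n j j p.1 + p.2)
      ∘ fun ω => (Hd X j ω, pT X j ω)) = pS X n := by
    ext ω
    show sg n j j (Hd X j ω) + pT X j ω = pS X n ω
    rw [sg_Hd le_rfl, pS_add_pT]
  have e2 : ((fun p : ({x // x ∈ headF n j} → ℝ) × ℝ => sg n j j p.1 + p.2)
      ∘ fun ω => (Hd X j ω, -pT X j ω)) = fun ω => pS X j ω - pT X j ω := by
    ext ω
    show sg n j j (Hd X j ω) + -pT X j ω = pS X j ω - pT X j ω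
    rw [sg_Hd le_rfl]; ring
  rw [e1, e2] at idc
  have hmeq := idc.measure_mem_eq (s := {x : ℝ | t ≤ |x|})
    (measurableSet_le measurable_const measurable_abs)
  have cover : {ω | t ≤ |pT X j ω|} ⊆ {ω | t ≤ |pS X n ω|}
      ∪ {ω | t ≤ |pS X j ω - pT X j ω|} := by
    intro ω hω
    simp only [Set.mem_setOf_eq, Set.mem_union] at hω ⊢
    by_contra hcon
    push_neg at hcon
    have h3 : pS X j ω + pT X j ω = pS X n ω := pS_add_pT j ω
    have h4 : |2 * pT X j ω| ≤ |pS X n ω| + |pS X j ω - pT X j ω| := by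
      have : 2 * pT X j ω = pS X n ω - (pS X j ω - pT X j ω) := by rw [← h3]; ring
      rw [this]
      exact abs_sub _ _
    rw [abs_mul] at h4
    have : |(2:ℝ)| = 2 := by norm_num
    rw [this] at h4
    linarith [hcon.1, hcon.2]
  calc ℙ {ω | t ≤ |pT X j ω|} ≤ ℙ ({ω | t ≤ |pS X n ω|} ∪ {ω | t ≤ |pS X j ω - pT X j ω|}) :=
        measure_mono cover
    _ ≤ ℙ {ω | t ≤ |pS X n ω|} + ℙ {ω | t ≤ |pS X j ω - pT X j ω|} := measure_union_le _ _
    _ = 2 * ℙ {ω | t ≤ |pS X n ω|} := by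
        have : ℙ {ω | t ≤ |pS X n ω|} = ℙ {ω | t ≤ |pS X j ω - pT X j ω|} := hmeq
        rw [← this, two_mul]

lemma onestep (mX : ∀ k, Measurable (X k))
    (hInd : iIndepFun X ℙ)
    (hSym : ∀ k, IdentDistrib (X k) (fun ω => -X k ω) ℙ ℙ)
    (u t : ℝ) (hu : 0 < u) (ht : 0 < t) :
    ℙ {ω | u + 2*t ≤ |pS X n ω|} ≤ (∑ k : Fin n, ℙ {ω | t ≤ |X k ω|})
      + 4 * ℙ {ω | t ≤ |pS X n ω|} * ℙ {ω | u ≤ |pS X n ω|} := by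
  classical
  set E := {ω : Ω | u + 2*t ≤ |pS X n ω|} with hE
  set q : ℕ → ℝ≥0∞ := fun m => if h : m < n then ℙ {ω | t ≤ |X ⟨m, h⟩ ω|} else 0 with hq
  set p := ℙ {ω | t ≤ |pS X n ω|} with hp
  -- coverage by first hitting time
  have cover : E ⊆ ⋃ j ∈ Finset.Icc 1 n, (Aev X u j ∩ E) := by
    intro ω hω
    have hEω : u + 2*t ≤ |pS X n ω| := hω
    have hex : ∃ j, u ≤ |pS X j ω| := ⟨n, by linarith⟩
    set j₀ := Nat.find hex with hj₀def
    have hj₀ : u ≤ |pS X j₀ ω| := Nat.find_spec hex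
    have hmin : ∀ i < j₀, ¬ u ≤ |pS X i ω| := fun i hi => Nat.find_min hex hi
    have hj₀n : j₀ ≤ n := Nat.find_min' hex (by linarith)
    have hj₀1 : 1 ≤ j₀ := by
      rcases Nat.eq_zero_or_pos j₀ with h | h
      · exfalso
        have := hj₀
        rw [h] at this
        rw [pS_zero] at this
        simp at this
        linarith
      · exact h
    refine Set.mem_biUnion (Finset.mem_Icc.mpr ⟨hj₀1, hj₀n⟩) ⟨⟨fun i hi => ?_, hj₀⟩, hω⟩
    exact not_le.mp (hmin i hi)
  -- per-index bound
  have main : ∀ j ∈ Finset.Icc 1 n,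
      ℙ (Aev X u j ∩ E) ≤ q (j-1) + ℙ (Aev X u j) * (2 * p) := by
    intro j hj
    rw [Finset.mem_Icc] at hj
    have hjn' : j - 1 < n := by omega
    set k₀ : Fin n := ⟨j - 1, hjn'⟩ with hk₀
    have cover2 : Aev X u j ∩ E ⊆ {ω | t ≤ |X k₀ ω|} ∪ (Aev X u j ∩ {ω | t ≤ |pT X j ω|}) := by
      rintro ω ⟨hA, hEω⟩
      rcases le_or_gt t (|X k₀ ω|) with h1 | h1
      · exact Or.inl h1
      rcases le_or_gt t (|pT X j ω|) with h2 | h2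
      · exact Or.inr ⟨hA, h2⟩
      exfalso
      have hprev : |pS X (j-1) ω| < u := hA.1 (j-1) (by omega)
      have hsucc : pS X j ω = pS X (j-1) ω + X k₀ ω := by
        have := pS_succ (X := X) hjn' ω
        have hjj : j - 1 + 1 = j := by omega
        rw [hjj] at this
        exact this
      have htot : pS X n ω = pS X j ω + pT X j ω := (pS_add_pT j ω).symm
      have hEω' : u + 2*t ≤ |pS X n ω| := hEω
      have habs : |pS X n ω| ≤ |pS X (j-1) ω| + |X k₀ ω| + |pT X j ω| := by
        rw [htot, hsucc]
        calc |pS X (j-1) ω + X k₀ ω + pT X j ω|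
            ≤ |pS X (j-1) ω + X k₀ ω| + |pT X j ω| := abs_add_le _ _
          _ ≤ |pS X (j-1) ω| + |X k₀ ω| + |pT X j ω| := by
              have := abs_add_le (pS X (j-1) ω) (X k₀ ω)
              linarith
      linarith
    have step1 : ℙ (Aev X u j ∩ E) ≤ ℙ {ω | t ≤ |X k₀ ω|}
        + ℙ (Aev X u j ∩ {ω | t ≤ |pT X j ω|}) :=
      (measure_mono cover2).trans (measure_union_le _ _)
    have hqj : ℙ {ω | t ≤ |X k₀ ω|} = q (j-1) := by
      rw [hq]; simp only [hjn', dif_pos]; rfl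
    have hindep : ℙ (Aev X u j ∩ {ω | t ≤ |pT X j ω|})
        = ℙ (Aev X u j) * ℙ {ω | t ≤ |pT X j ω|} := by
      have h := (indepHT mX hInd j).measure_inter_preimage_eq_mul
        (Gset n u j) {x : ℝ | t ≤ |x|} mGset
        (measurableSet_le measurable_const measurable_abs)
      rw [Aev_pre]
      exact h
    have htail : ℙ {ω | t ≤ |pT X j ω|} ≤ 2 * p := tail_bound mX hInd hSym j t
    calc ℙ (Aev X u j ∩ E) ≤ ℙ {ω | t ≤ |X k₀ ω|} + ℙ (Aev X u j ∩ {ω | t ≤ |pT X j ω|}) := step1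
      _ = q (j-1) + ℙ (Aev X u j) * ℙ {ω | t ≤ |pT X j ω|} := by rw [hqj, hindep]
      _ ≤ q (j-1) + ℙ (Aev X u j) * (2 * p) := by
          exact add_le_add_right (mul_le_mul_right htail _) _
  -- sum up
  have sum_q : ∑ j ∈ Finset.Icc 1 n, q (j-1) = ∑ k : Fin n, ℙ {ω | t ≤ |X k ω|} := by
    have h1 : ∑ j ∈ Finset.Icc 1 n, q (j-1) = ∑ m ∈ Finset.range n, q m := by
      apply Finset.sum_nbij' (fun j => j - 1) (fun m => m + 1)
      · intro a ha; rw [Finset.mem_Icc] at ha; rw [Finset.mem_range]; omega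
      · intro a ha; rw [Finset.mem_range] at ha; rw [Finset.mem_Icc]; omega
      · intro a ha; rw [Finset.mem_Icc] at ha; omega
      · intro a ha; omega
      · intro a _; rfl
    rw [h1, ← Fin.sum_univ_eq_sum_range]
    apply Finset.sum_congr rfl
    intro k _
    rw [hq]
    simp only [k.isLt, dif_pos]
  calc ℙ E ≤ ℙ (⋃ j ∈ Finset.Icc 1 n, (Aev X u j ∩ E)) := measure_mono cover
    _ ≤ ∑ j ∈ Finset.Icc 1 n, ℙ (Aev X u j ∩ E) := measure_biUnion_finset_le _ _
    _ ≤ ∑ j ∈ Finset.Icc 1 n, (q (j-1) + ℙ (Aev X u j) * (2 * p)) := Finset.sum_le_sum main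
    _ = (∑ j ∈ Finset.Icc 1 n, q (j-1)) + (∑ j ∈ Finset.Icc 1 n, ℙ (Aev X u j)) * (2 * p) := by
        rw [Finset.sum_add_distrib, Finset.sum_mul]
    _ ≤ (∑ k : Fin n, ℙ {ω | t ≤ |X k ω|}) + (2 * ℙ {ω | u ≤ |pS X n ω|}) * (2 * p) := by
        rw [sum_q]
        exact add_le_add_right (mul_le_mul_left (levy mX hInd hSym u) _) _
    _ = (∑ k : Fin n, ℙ {ω | t ≤ |X k ω|}) + 4 * p * ℙ {ω | u ≤ |pS X n ω|} := by
        ring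

lemma iterate (mX : ∀ k, Measurable (X k))
    (hInd : iIndepFun X ℙ)
    (hSym : ∀ k, IdentDistrib (X k) (fun ω => -X k ω) ℙ ℙ)
    (t : ℝ) (ht : 0 < t) (m : ℕ) :
    ℙ {ω | 2*((m:ℝ)+1)*t ≤ |pS X n ω|} ≤
      (∑ k : Fin n, ℙ {ω | t ≤ |X k ω|})
        * (∑ i ∈ Finset.range m, (4 * ℙ {ω | t ≤ |pS X n ω|})^i)
      + (4 * ℙ {ω | t ≤ |pS X n ω|})^m * ℙ {ω | t ≤ |pS X n ω|} := by
  set Q := ∑ k : Fin n, ℙ {ω | t ≤ |X k ω|} with hQ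
  set p := ℙ {ω | t ≤ |pS X n ω|} with hp
  induction m with
  | zero =>
    have hsub : {ω : Ω | 2*(((0:ℕ):ℝ)+1)*t ≤ |pS X n ω|} ⊆ {ω | t ≤ |pS X n ω|} := by
      intro ω hω
      have hω' : 2*(((0:ℕ):ℝ)+1)*t ≤ |pS X n ω| := hω
      have : t ≤ |pS X n ω| := by push_cast at hω'; linarith
      exact this
    refine le_trans (measure_mono hsub) ?_
    simp
    exact le_rfl
  | succ m ih =>
    have hu : 0 < 2*((m:ℝ)+1)*t := by positivity
    have hev : {ω : Ω | 2*((↑(m+1):ℝ)+1)*t ≤ |pS X n ω|}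
        = {ω : Ω | 2*((m:ℝ)+1)*t + 2*t ≤ |pS X n ω|} := by
      ext ω
      have : 2*((↑(m+1):ℝ)+1)*t = 2*((m:ℝ)+1)*t + 2*t := by push_cast; ring
      rw [Set.mem_setOf_eq, Set.mem_setOf_eq, this]
    rw [hev]
    calc ℙ {ω : Ω | 2*((m:ℝ)+1)*t + 2*t ≤ |pS X n ω|}
        ≤ Q + 4 * p * ℙ {ω | 2*((m:ℝ)+1)*t ≤ |pS X n ω|} :=
          onestep mX hInd hSym _ t hu ht
      _ ≤ Q + 4 * p * (Q * (∑ i ∈ Finset.range m, (4*p)^i) + (4*p)^m * p) := by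
          exact add_le_add_right (mul_le_mul_right ih _) _
      _ = Q * (∑ i ∈ Finset.range (m+1), (4*p)^i) + (4*p)^(m+1) * p := by
          rw [geom_sum_succ]
          ring

end HJaux

open HJaux

theorem stmt15 (r : ℕ) (hr : 0 < r) :
    ∃ C D : ℝ,
      ∀ (Ω : Type) (_ : MeasureSpace Ω), IsProbabilityMeasure (ℙ : Measure Ω) →
        ∀ (n : ℕ) (X : Fin n → Ω → ℝ),
          (∀ k, Measurable (X k)) →
          iIndepFun X ℙ →
          (∀ k, IdentDistrib (X k) (fun ω => -X k ω) ℙ ℙ) →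
          ∀ lam : ℝ, 0 ≤ lam →
            (ℙ {ω | lam ≤ |∑ k, X k ω|}).toReal ≤
              C * ∑ k, (ℙ {ω | lam / (2 * r) ≤ |X k ω|}).toReal +
                D * ((ℙ {ω | lam / (2 * r) ≤ |∑ k, X k ω|}).toReal) ^ r := by
  classical
  refine ⟨4^r, 4^r, ?_⟩
  intro Ω _ hPM n X mX hInd hSym lam hlam
  haveI := hPM
  have hr4 : (1:ℝ) ≤ 4^r := one_le_pow₀ (by norm_num : (1:ℝ) ≤ 4)
  have hsum_nonneg : 0 ≤ ∑ k, (ℙ {ω | lam / (2 * r) ≤ |X k ω|}).toReal :=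
    Finset.sum_nonneg fun k _ => ENNReal.toReal_nonneg
  rcases eq_or_lt_of_le hlam with h0 | hpos
  · -- lam = 0
    have hlam0 : lam = 0 := h0.symm
    subst hlam0
    have h1 : {ω : Ω | (0:ℝ) ≤ |∑ k, X k ω|} = Set.univ := by
      ext ω; simp [abs_nonneg]
    have h2 : (0:ℝ) / (2 * r) = 0 := by simp
    rw [h2, h1]
    simp only [measure_univ, ENNReal.toReal_one, one_pow, mul_one]
    have hs0 : 0 ≤ ∑ k, (ℙ {ω : Ω | (0:ℝ) ≤ |X k ω|}).toReal :=
      Finset.sum_nonneg fun k _ => ENNReal.toReal_nonneg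
    have h40 : (0:ℝ) ≤ 4^r := by positivity
    nlinarith [mul_nonneg h40 hs0]
  · -- lam > 0
    set t := lam / (2 * (r:ℝ)) with htdef
    have hrpos : (0:ℝ) < r := by exact_mod_cast hr
    have ht : 0 < t := div_pos hpos (by positivity)
    have key := iterate mX hInd hSym t ht (r-1)
    set Q := ∑ k : Fin n, ℙ {ω : Ω | t ≤ |X k ω|} with hQ
    set p := ℙ {ω : Ω | t ≤ |pS X n ω|} with hp
    have hcast : ((r-1 : ℕ) : ℝ) + 1 = (r : ℝ) := by
      have : (1:ℕ) ≤ r := hr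
      push_cast [Nat.cast_sub this]
      ring
    have hev1 : {ω : Ω | lam ≤ |∑ k, X k ω|}
        = {ω : Ω | 2*(((r-1:ℕ):ℝ)+1)*t ≤ |pS X n ω|} := by
      ext ω
      rw [Set.mem_setOf_eq, Set.mem_setOf_eq, pS_top, hcast]
      have : 2*(r:ℝ)*t = lam := by
        rw [htdef]; field_simp
      rw [this]
    have hev2 : {ω : Ω | lam / (2 * (r:ℝ)) ≤ |∑ k, X k ω|} = {ω : Ω | t ≤ |pS X n ω|} := by
      ext ω
      rw [Set.mem_setOf_eq, Set.mem_setOf_eq, pS_top]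
    rw [hev1, hev2]
    -- finiteness
    have hQne : Q ≠ ⊤ := by
      rw [hQ]
      exact (ENNReal.sum_lt_top.mpr fun k _ => measure_lt_top ℙ _).ne
    have hpne : p ≠ ⊤ := measure_ne_top ℙ _
    have h4pne : (4 * p) ≠ ⊤ := ENNReal.mul_ne_top (by norm_num) hpne
    have hSne : (∑ i ∈ Finset.range (r-1), (4*p)^i) ≠ ⊤ :=
      (ENNReal.sum_lt_top.mpr fun i _ => (ENNReal.pow_ne_top h4pne).lt_top).ne
    have hRHSne : Q * (∑ i ∈ Finset.range (r-1), (4*p)^i) + (4*p)^(r-1) * p ≠ ⊤ := by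
      apply ENNReal.add_ne_top.mpr
      exact ⟨ENNReal.mul_ne_top hQne hSne, ENNReal.mul_ne_top (ENNReal.pow_ne_top h4pne) hpne⟩
    have main := ENNReal.toReal_mono hRHSne key
    refine le_trans main ?_
    -- convert toReal of RHS
    rw [ENNReal.toReal_add (ENNReal.mul_ne_top hQne hSne)
      (ENNReal.mul_ne_top (ENNReal.pow_ne_top h4pne) hpne),
      ENNReal.toReal_mul, ENNReal.toReal_mul, ENNReal.toReal_pow, ENNReal.toReal_mul]
    have h4 : (4:ℝ≥0∞).toReal = 4 := by simp
    rw [h4]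
    set pR := p.toReal with hpR
    have hpR1 : pR ≤ 1 := by
      rw [hpR]
      calc p.toReal ≤ (1:ℝ≥0∞).toReal := ENNReal.toReal_mono (by norm_num) prob_le_one
        _ = 1 := by simp
    have hpR0 : 0 ≤ pR := ENNReal.toReal_nonneg
    have hQR : Q.toReal = ∑ k, (ℙ {ω : Ω | t ≤ |X k ω|}).toReal :=
      ENNReal.toReal_sum fun k _ => measure_ne_top ℙ _
    have hQR0 : 0 ≤ Q.toReal := ENNReal.toReal_nonneg
    have hSR : (∑ i ∈ Finset.range (r-1), (4*p)^i).toReal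
        = ∑ i ∈ Finset.range (r-1), (4*pR)^i := by
      rw [ENNReal.toReal_sum fun i _ => ENNReal.pow_ne_top h4pne]
      apply Finset.sum_congr rfl
      intro i _
      rw [ENNReal.toReal_pow, ENNReal.toReal_mul, h4]
    rw [hSR, hQR]
    -- real estimates
    have hgeom : ∑ i ∈ Finset.range (r-1), (4*pR)^i ≤ 4^r := by
      calc ∑ i ∈ Finset.range (r-1), (4*pR)^i ≤ ∑ i ∈ Finset.range (r-1), (4:ℝ)^i := by
            apply Finset.sum_le_sum
            intro i _
            apply pow_le_pow_left₀ (by positivity)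
            linarith
        _ ≤ 4^(r-1) := by
            have h41 : (4:ℝ) ≠ 1 := by norm_num
            rw [geom_sum_eq h41]
            have h4p : (1:ℝ) ≤ 4^(r-1) := one_le_pow₀ (by norm_num : (1:ℝ) ≤ 4)
            nlinarith
        _ ≤ 4^r := pow_le_pow_right₀ (by norm_num) (Nat.sub_le r 1)
    have hterm2 : (4*pR)^(r-1) * pR ≤ 4^r * pR^r := by
      have h1 : (4*pR)^(r-1) * pR = 4^(r-1) * (pR^(r-1) * pR) := by
        rw [mul_pow]; ring
      have h2 : pR^(r-1) * pR = pR^r := by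
        rw [← pow_succ, Nat.sub_add_cancel hr]
      rw [h1, h2]
      apply mul_le_mul_of_nonneg_right _ (by positivity)
      exact pow_le_pow_right₀ (by norm_num) (Nat.sub_le r 1)
    have hterm1 : Q.toReal * (∑ i ∈ Finset.range (r-1), (4*pR)^i)
        ≤ 4^r * Q.toReal := by
      rw [mul_comm (4^r : ℝ)]
      exact mul_le_mul_of_nonneg_left hgeom hQR0
    rw [hQR] at hterm1
    calc (∑ k, (ℙ {ω : Ω | t ≤ |X k ω|}).toReal) * (∑ i ∈ Finset.range (r-1), (4*pR)^i)
          + (4*pR)^(r-1) * pR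
        ≤ 4^r * (∑ k, (ℙ {ω : Ω | t ≤ |X k ω|}).toReal) + 4^r * pR^r :=
          add_le_add hterm1 hterm2
      _ = 4^r * (∑ k, (ℙ {ω : Ω | t ≤ |X k ω|}).toReal) + 4^r * ((ℙ {ω : Ω | t ≤ |pS X n ω|}).toReal)^r := by
          rw [hpR, hp]
end
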